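/- arXiv:2112.12511 — 5 statements merged into one kernel-verified Lean document; each statement's English description precedes it below -/
import Mathlib

section
/- Let d ≥ 1, n ≥ 2, and let P_1, …, P_n be distinct points of ℝ^d. Suppose w_1, …, w_{n−1} ∈ ℝ^d satisfy Σ_{i=1}^{n−1} h_i ⟨w_i, t⟩ ≤ max_i |h_i| for every unit vector t ∈ ℝ^d and every h ∈ ℤ^{n−1}. Then every irrigation network L = ⋃_{i=1}^{n−1} λ_i for (P_1,…,P_{n−1}; P_n) satisfies H¹(L) ≥ Σ_{i=1}^{n−1} ⟨w_i, P_n − P_i⟩. -/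
open MeasureTheory Finset Set
open scoped InnerProductSpace

noncomputable section

abbrev Euc (d : ℕ) := EuclideanSpace ℝ (Fin d)

/-- The norm `ψ_α` on `ℝ^m`: the `ℓ^{1/α}` norm for `α ∈ (0,1]` and the max norm for `α = 0`. -/
def psiNorm (α : ℝ) {m : ℕ} (h : Fin m → ℝ) : ℝ :=
  if α = 0 then ⨆ i, |h i| else (∑ i, |h i| ^ (1 / α)) ^ α

/-- The pre-jacobian `ju(x)`: its `k`-th component is the determinant of the matrix of partial
derivatives of `u` at `x` with the `k`-th column replaced by `u x`. -/
def pjac {d : ℕ} (u : Euc d → Euc d) (x : Euc d) (k : Fin d) : ℝ :=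
  Matrix.det (Matrix.of fun i j : Fin d =>
    if j = k then u x i else fderiv ℝ u x (EuclideanSpace.single j 1) i)

/-- The Frobenius norm of the derivative of `u` at `x`. -/
def frobD {d : ℕ} (u : Euc d → Euc d) (x : Euc d) : ℝ :=
  Real.sqrt (∑ j : Fin d, ‖fderiv ℝ u x (EuclideanSpace.single j 1)‖ ^ 2)

/-- `α_{d-1}`: the Lebesgue measure of the unit ball of `ℝ^d`. -/
def ballVol (d : ℕ) : ℝ := (volume (Metric.ball (0 : Euc d) 1)).toReal

/-- `u : ℝ^d → S^{d-1}` is an admissible dipole map for `(A, B)`. -/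
structure IsDipole {d : ℕ} (A B : Euc d) (u : Euc d → Euc d) : Prop where
  sphere : ∀ x, ‖u x‖ = 1
  locLip : ∀ x : Euc d, x ≠ A → x ≠ B → ∃ ε > 0, ∃ K : NNReal,
    LipschitzOnWith K u (Metric.ball x ε \ {A, B})
  eventuallyConst : ∃ R : ℝ, ∃ c : Euc d, ∀ x : Euc d, R < ‖x‖ → u x = c
  finiteEnergy : Integrable (fun x => frobD u x ^ (d - 1))
  jacobian : ∀ φ : Euc d → ℝ, ContDiff ℝ (⊤ : ℕ∞) φ → HasCompactSupport φ →
    (∫ x, ∑ j : Fin d, fderiv ℝ φ x (EuclideanSpace.single j 1) * pjac u x j)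
      = ballVol d * (φ B - φ A)

/-- The energy density `e_α(u⃗)(x)`. -/
def eDens {d m : ℕ} (α : ℝ) (u : Fin m → Euc d → Euc d) (x : Euc d) : ℝ :=
  ((d : ℝ) - 1) ^ (-(((d : ℝ) - 1) / 2)) *
    sInf { r : ℝ | ∃ P : Finpartition (Finset.univ : Finset (Fin m)),
      (∀ I ∈ P.parts, ∀ i ∈ I, ∀ l ∈ I, pjac (u i) x = pjac (u l) x) ∧
      r = ∑ I ∈ P.parts, (I.card : ℝ) ^ α *
        sInf { y : ℝ | ∃ i ∈ I, y = frobD (u i) x ^ (d - 1) } }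

/-- The energy `E_α(u⃗)`. -/
def energyE {d m : ℕ} (α : ℝ) (u : Fin m → Euc d → Euc d) : ℝ := ∫ x, eDens α u x

/-- An irrigation network for sources `P i` and sink `Q`: each `lam i` is the image of an
injective Lipschitz curve from `P i` to `Q`. -/
def IsNetwork {d m : ℕ} (P : Fin m → Euc d) (Q : Euc d) (lam : Fin m → Set (Euc d)) : Prop :=
  ∀ i, ∃ γ : ℝ → Euc d, (∃ K : NNReal, LipschitzOnWith K γ (Set.Icc 0 1)) ∧
    Set.InjOn γ (Set.Icc 0 1) ∧ γ 0 = P i ∧ γ 1 = Q ∧ lam i = γ '' Set.Icc 0 1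

/-- The multiplicity `θ(x)` of the point `x` in the network. -/
def theta {d m : ℕ} (lam : Fin m → Set (Euc d)) (x : Euc d) : ℕ :=
  Nat.card {i : Fin m // x ∈ lam i}

/-- The cost `I_α(L) = ∫_L θ(x)^α dH¹(x)`. -/
def Icost {d m : ℕ} (α : ℝ) (lam : Fin m → Set (Euc d)) : ℝ :=
  ∫ x in ⋃ i, lam i, (theta lam x : ℝ) ^ α ∂(Measure.hausdorffMeasure 1)

/-- A set is a polygonal path if it is a finite chain of segments. -/
def IsPolygonal {d : ℕ} (s : Set (Euc d)) : Prop :=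
  ∃ (k : ℕ) (q : Fin (k + 1) → Euc d),
    s = ⋃ j : Fin k, segment ℝ (q j.castSucc) (q j.succ)


section Stmt6Aux

open MeasureTheory Set

variable {d : ℕ}

private lemma singleton_null1 (x : Euc d) : μH[1] ({x} : Set (Euc d)) = 0 := by
  haveI := MeasureTheory.Measure.noAtoms_hausdorff (Euc d) (by norm_num : (0:ℝ) < 1)
  exact measure_singleton x

private lemma edge_bound {C : Set (Euc d)} (hC : IsPreconnected C) {x y : Euc d}
    (hx : x ∈ C) (hy : y ∈ C) {W : Euc d} (hW : ‖W‖ ≤ 1) :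
    ENNReal.ofReal ⟪W, y - x⟫_ℝ ≤ μH[1] C := by
  have hf : LipschitzWith 1 (fun z : Euc d => ⟪W, z⟫_ℝ) := by
    apply LipschitzWith.of_dist_le_mul
    intro a b
    rw [Real.dist_eq, ← inner_sub_right]
    calc |⟪W, a - b⟫_ℝ| ≤ ‖W‖ * ‖a - b‖ := abs_real_inner_le_norm W (a - b)
      _ ≤ 1 * dist a b := by
          rw [dist_eq_norm]
          exact mul_le_mul_of_nonneg_right hW (norm_nonneg _)
  have h1 : μH[1] ((fun z : Euc d => ⟪W, z⟫_ℝ) '' C) ≤ μH[1] C := by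
    simpa using hf.hausdorffMeasure_image_le (by norm_num : (0:ℝ) ≤ 1) C
  rcases le_or_gt ⟪W, y - x⟫_ℝ 0 with h | h
  · rw [ENNReal.ofReal_of_nonpos h]; exact zero_le
  · have hxy : ⟪W, x⟫_ℝ ≤ ⟪W, y⟫_ℝ := by
      rw [inner_sub_right] at h; linarith
    have hsub : Set.Icc ⟪W, x⟫_ℝ ⟪W, y⟫_ℝ ⊆ (fun z : Euc d => ⟪W, z⟫_ℝ) '' C :=
      (hC.image _ hf.continuous.continuousOn).Icc_subset ⟨x, hx, rfl⟩ ⟨y, hy, rfl⟩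
    calc ENNReal.ofReal ⟪W, y - x⟫_ℝ
        = volume (Set.Icc ⟪W, x⟫_ℝ ⟪W, y⟫_ℝ) := by
          rw [Real.volume_Icc, inner_sub_right]
      _ = μH[1] (Set.Icc ⟪W, x⟫_ℝ ⟪W, y⟫_ℝ) := by rw [MeasureTheory.hausdorffMeasure_real]
      _ ≤ μH[1] ((fun z : Euc d => ⟪W, z⟫_ℝ) '' C) := measure_mono hsub
      _ ≤ μH[1] C := h1

/-- Flow along a single injective curve: carried flow `E` entering at `a` plus demands `D`
entering at parameters `s i ∈ [a, τ]`, all flowing to `γ τ`. -/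
private lemma arc_flow {ι : Type*} [DecidableEq ι] (γ : ℝ → Euc d)
    (hc : ContinuousOn γ (Set.Icc 0 1)) (hinj : Set.InjOn γ (Set.Icc 0 1))
    (w : ι → Euc d) (hw : ∀ S : Finset ι, ‖∑ i ∈ S, w i‖ ≤ 1)
    {τ : ℝ} (hτ : τ ≤ 1) :
    ∀ (N : ℕ) (D E : Finset ι), D.card = N → Disjoint D E →
      ∀ (a : ℝ) (s : ι → ℝ), 0 ≤ a → a ≤ τ → (∀ i ∈ D, s i ∈ Set.Icc a τ) →
      ENNReal.ofReal (⟪∑ i ∈ E, w i, γ τ - γ a⟫_ℝ + ∑ i ∈ D, ⟪w i, γ τ - γ (s i)⟫_ℝ)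
        ≤ μH[1] (γ '' Set.Icc a τ) := by
  intro N
  induction N with
  | zero =>
    intro D E hcard hdisj a s ha haτ hs
    have hD : D = ∅ := Finset.card_eq_zero.mp hcard
    subst hD
    simp only [Finset.sum_empty, add_zero]
    refine edge_bound (isPreconnected_Icc.image _ (hc.mono (Set.Icc_subset_Icc ha hτ)))
      ⟨a, ⟨le_rfl, haτ⟩, rfl⟩ ⟨τ, ⟨haτ, le_rfl⟩, rfl⟩ (hw E)
  | succ N ih =>
    intro D E hcard hdisj a s ha haτ hs
    have hDne : D.Nonempty := Finset.card_pos.mp (by omega)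
    obtain ⟨i0, hi0, hmin⟩ := D.exists_min_image s hDne
    set b := s i0 with hbdef
    have hb : b ∈ Set.Icc a τ := hs i0 hi0
    have hb0 : 0 ≤ b := ha.trans hb.1
    have hi0E : i0 ∉ E := Finset.disjoint_left.mp hdisj hi0
    have key : ⟪∑ i ∈ E, w i, γ τ - γ a⟫_ℝ + ∑ i ∈ D, ⟪w i, γ τ - γ (s i)⟫_ℝ
        = ⟪∑ i ∈ E, w i, γ b - γ a⟫_ℝ
          + (⟪∑ i ∈ insert i0 E, w i, γ τ - γ b⟫_ℝ
            + ∑ i ∈ D.erase i0, ⟪w i, γ τ - γ (s i)⟫_ℝ) := by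
      have h1 : γ τ - γ a = (γ τ - γ b) + (γ b - γ a) := (sub_add_sub_cancel _ _ _).symm
      have h2 : (∑ i ∈ D, ⟪w i, γ τ - γ (s i)⟫_ℝ)
          = ⟪w i0, γ τ - γ b⟫_ℝ + ∑ i ∈ D.erase i0, ⟪w i, γ τ - γ (s i)⟫_ℝ :=
        (Finset.add_sum_erase D (fun i => ⟪w i, γ τ - γ (s i)⟫_ℝ) hi0).symm
      have h3 : (∑ i ∈ insert i0 E, w i) = w i0 + ∑ i ∈ E, w i := Finset.sum_insert hi0E
      rw [h1, inner_add_right, h2, h3, inner_add_left]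
      ring
    rw [key]
    refine le_trans ENNReal.ofReal_add_le ?_
    have hmeasY : MeasurableSet (γ '' Set.Icc b τ) :=
      (isCompact_Icc.image_of_continuousOn
        (hc.mono (Set.Icc_subset_Icc hb0 hτ))).isClosed.measurableSet
    have hXY : μH[1] (γ '' Set.Icc a b) + μH[1] (γ '' Set.Icc b τ) ≤ μH[1] (γ '' Set.Icc a τ) := by
      have hiu := measure_union_add_inter (μ := (μH[1] : Measure (Euc d)))
        (γ '' Set.Icc a b) hmeasY
      have hnull : μH[1] (γ '' Set.Icc a b ∩ γ '' Set.Icc b τ) = 0 := by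
        refine measure_mono_null ?_ (singleton_null1 (γ b))
        rintro x ⟨⟨t1, ht1, rfl⟩, ⟨t2, ht2, heq⟩⟩
        have e1 : t1 ∈ Set.Icc (0:ℝ) 1 := ⟨ha.trans ht1.1, (ht1.2.trans hb.2).trans hτ⟩
        have e2 : t2 ∈ Set.Icc (0:ℝ) 1 := ⟨hb0.trans ht2.1, ht2.2.trans hτ⟩
        have ht12 : t2 = t1 := hinj e2 e1 heq
        have : t1 = b := le_antisymm ht1.2 (by rw [← ht12]; exact ht2.1)
        simp [this]
      have himg : γ '' Set.Icc a b ∪ γ '' Set.Icc b τ = γ '' Set.Icc a τ := by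
        rw [← Set.image_union, Set.Icc_union_Icc_eq_Icc hb.1 hb.2]
      rw [himg, hnull, add_zero] at hiu
      exact le_of_eq hiu.symm
    refine le_trans (add_le_add ?_ ?_) hXY
    · exact edge_bound (isPreconnected_Icc.image _ (hc.mono (Set.Icc_subset_Icc ha (hb.2.trans hτ))))
        ⟨a, ⟨le_rfl, hb.1⟩, rfl⟩ ⟨b, ⟨hb.1, le_rfl⟩, rfl⟩ (hw E)
    · refine ih (D.erase i0) (insert i0 E) ?_ ?_ b s hb0 hb.2 ?_
      · rw [Finset.card_erase_of_mem hi0, hcard]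
        omega
      · refine Finset.disjoint_left.mpr ?_
        intro i hie
        simp only [Finset.mem_insert]
        push_neg
        exact ⟨Finset.ne_of_mem_erase hie,
          Finset.disjoint_left.mp hdisj (Finset.mem_of_mem_erase hie)⟩
      · intro i hi
        exact ⟨hmin i (Finset.mem_of_mem_erase hi), (hs i (Finset.mem_of_mem_erase hi)).2⟩

private lemma sum_measure_le {X : Type*} [MeasurableSpace X] (μ : MeasureTheory.Measure X)
    {ι : Type*} (s : Finset ι) (A : ι → Set X)
    (hA : ∀ i ∈ s, MeasurableSet (A i))
    (hnull : ∀ i ∈ s, ∀ j ∈ s, i ≠ j → μ (A i ∩ A j) = 0) :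
    ∑ i ∈ s, μ (A i) ≤ μ (⋃ i ∈ s, A i) := by
  classical
  revert hA hnull
  induction s using Finset.induction_on with
  | empty => intro _ _; simp
  | @insert a s hna ih =>
    intro hA hnull
    have hU : MeasurableSet (⋃ i ∈ s, A i) :=
      s.measurableSet_biUnion (fun i hi => hA i (Finset.mem_insert_of_mem hi))
    have hnullU : μ (A a ∩ ⋃ i ∈ s, A i) = 0 := by
      have hsubset : A a ∩ ⋃ i ∈ s, A i ⊆ ⋃ i ∈ s, A a ∩ A i := by
        rintro x ⟨hxa, hxu⟩
        simp only [Set.mem_iUnion] at hxu ⊢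
        obtain ⟨i, hi, hx⟩ := hxu
        exact ⟨i, hi, hxa, hx⟩
      refine measure_mono_null hsubset ?_
      refine (measure_biUnion_null_iff s.countable_toSet).mpr ?_
      intro i hi
      exact hnull a (Finset.mem_insert_self a s) i (Finset.mem_insert_of_mem hi)
        (fun h => hna (h ▸ hi))
    have hcomb := measure_union_add_inter (μ := μ) (A a) hU
    rw [hnullU, add_zero] at hcomb
    calc ∑ i ∈ insert a s, μ (A i) = μ (A a) + ∑ i ∈ s, μ (A i) := Finset.sum_insert hna
      _ ≤ μ (A a) + μ (⋃ i ∈ s, A i) := by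
          exact add_le_add_right (ih (fun i hi => hA i (Finset.mem_insert_of_mem hi))
            (fun i hi j hj hij => hnull i (Finset.mem_insert_of_mem hi) j
              (Finset.mem_insert_of_mem hj) hij)) _
      _ = μ (A a ∪ ⋃ i ∈ s, A i) := hcomb.symm
      _ = μ (⋃ i ∈ insert a s, A i) := by rw [Finset.set_biUnion_insert]

/-- The greedy "first-hitting" tree built from the curves. -/
private def treeAux (g : ℕ → ℝ → Euc d) (Q : Euc d) : ℕ → Set (Euc d)
  | 0 => {Q}
  | k + 1 => treeAux g Q k ∪
      g k '' Set.Icc 0 (sInf (Set.Icc (0:ℝ) 1 ∩ g k ⁻¹' treeAux g Q k))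

private def hitT (g : ℕ → ℝ → Euc d) (Q : Euc d) (k : ℕ) : ℝ :=
  sInf (Set.Icc (0:ℝ) 1 ∩ g k ⁻¹' treeAux g Q k)

private lemma treeAux_zero (g : ℕ → ℝ → Euc d) (Q : Euc d) : treeAux g Q 0 = {Q} := rfl

private lemma treeAux_succ (g : ℕ → ℝ → Euc d) (Q : Euc d) (k : ℕ) :
    treeAux g Q (k + 1) = treeAux g Q k ∪ g k '' Set.Icc 0 (hitT g Q k) := rfl

variable {g : ℕ → ℝ → Euc d} {Q : Euc d}

private lemma Q_mem_treeAux : ∀ k, Q ∈ treeAux g Q k := by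
  intro k
  induction k with
  | zero => exact Set.mem_singleton Q
  | succ k ih => exact Set.mem_union_left _ ih

private lemma treeAux_mono {j k : ℕ} (h : j ≤ k) : treeAux g Q j ⊆ treeAux g Q k := by
  induction k with
  | zero => rw [Nat.le_zero.mp h]
  | succ k ih =>
    rcases Nat.lt_or_ge j (k+1) with h' | h'
    · exact (ih (Nat.lt_succ_iff.mp h')).trans Set.subset_union_left
    · rw [le_antisymm h h']

private lemma treeAux_isClosed (Hc : ∀ k, ContinuousOn (g k) (Set.Icc 0 1))
    (He : ∀ k, g k 1 = Q) : ∀ k, IsClosed (treeAux g Q k) := by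
  intro k
  induction k with
  | zero => exact isClosed_singleton
  | succ k ih =>
    have hclosed : IsClosed (Set.Icc (0:ℝ) 1 ∩ g k ⁻¹' treeAux g Q k) :=
      (Hc k).preimage_isClosed_of_isClosed isClosed_Icc ih
    have hcp : IsCompact (Set.Icc (0:ℝ) 1 ∩ g k ⁻¹' treeAux g Q k) :=
      isCompact_Icc.of_isClosed_subset hclosed Set.inter_subset_left
    have hne : (Set.Icc (0:ℝ) 1 ∩ g k ⁻¹' treeAux g Q k).Nonempty :=
      ⟨1, ⟨zero_le_one, le_rfl⟩, by simp [He k, Q_mem_treeAux]⟩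
    have hmem := hcp.sInf_mem hne
    exact ih.union ((isCompact_Icc.image_of_continuousOn
      ((Hc k).mono (Set.Icc_subset_Icc le_rfl hmem.1.2))).isClosed)

private lemma hitT_mem (Hc : ∀ k, ContinuousOn (g k) (Set.Icc 0 1))
    (He : ∀ k, g k 1 = Q) (k : ℕ) :
    hitT g Q k ∈ Set.Icc (0:ℝ) 1 ∩ g k ⁻¹' treeAux g Q k := by
  have hclosed : IsClosed (Set.Icc (0:ℝ) 1 ∩ g k ⁻¹' treeAux g Q k) :=
    (Hc k).preimage_isClosed_of_isClosed isClosed_Icc (treeAux_isClosed Hc He k)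
  have hcp : IsCompact (Set.Icc (0:ℝ) 1 ∩ g k ⁻¹' treeAux g Q k) :=
    isCompact_Icc.of_isClosed_subset hclosed Set.inter_subset_left
  have hne : (Set.Icc (0:ℝ) 1 ∩ g k ⁻¹' treeAux g Q k).Nonempty :=
    ⟨1, ⟨zero_le_one, le_rfl⟩, by simp [He k, Q_mem_treeAux]⟩
  exact hcp.sInf_mem hne

private lemma hitT_min {k : ℕ} {t : ℝ} (ht : t ∈ Set.Icc (0:ℝ) 1)
    (h : g k t ∈ treeAux g Q k) : hitT g Q k ≤ t :=
  csInf_le ⟨0, fun x hx => hx.1.1⟩ ⟨ht, h⟩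

private lemma arc_inter_tree (Hc : ∀ k, ContinuousOn (g k) (Set.Icc 0 1))
    (He : ∀ k, g k 1 = Q) (k : ℕ) :
    g k '' Set.Icc 0 (hitT g Q k) ∩ treeAux g Q k ⊆ {g k (hitT g Q k)} := by
  rintro x ⟨⟨t, ht, rfl⟩, hx⟩
  have hτ := (hitT_mem Hc He k).1
  have ht1 : t ∈ Set.Icc (0:ℝ) 1 := ⟨ht.1, ht.2.trans hτ.2⟩
  have : t = hitT g Q k := le_antisymm ht.2 (hitT_min ht1 hx)
  simp [this]

end Stmt6Aux


/-- a constant-coefficient calibration for the max-norm `ψ_0` (Steiner case) bounds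
from below the length `H¹(L)` of every irrigation network. -/
theorem stmt6 (d n : ℕ) (hd : 1 ≤ d) (hn : 2 ≤ n)
    (P : Fin (n - 1) → Euc d) (Q : Euc d)
    (hP : Function.Injective P) (hPQ : ∀ i, P i ≠ Q)
    (w : Fin (n - 1) → Euc d)
    (hcal : ∀ t : Euc d, ‖t‖ = 1 → ∀ h : Fin (n - 1) → ℤ,
      ∑ i, (h i : ℝ) * ⟪w i, t⟫_ℝ ≤ ⨆ i, |(h i : ℝ)|)
    (lam : Fin (n - 1) → Set (Euc d)) (hnet : IsNetwork P Q lam) :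
    ENNReal.ofReal (∑ i, ⟪w i, Q - P i⟫_ℝ)
      ≤ Measure.hausdorffMeasure 1 (⋃ i, lam i) := by
  classical
  have hm : 0 < n - 1 := by omega
  haveI : Nonempty (Fin (n - 1)) := ⟨⟨0, hm⟩⟩
  -- Step 1: every partial sum of the `w i` has norm at most 1.
  have hw : ∀ S : Finset (Fin (n - 1)), ‖∑ i ∈ S, w i‖ ≤ 1 := by
    intro S
    by_cases hW : (∑ i ∈ S, w i) = 0
    · simp [hW]
    · set W := ∑ i ∈ S, w i with hWdef
      have hWn : ‖W‖ ≠ 0 := norm_ne_zero_iff.mpr hW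
      have ht : ‖(‖W‖⁻¹ • W : Euc d)‖ = 1 := by
        rw [norm_smul, norm_inv, norm_norm, inv_mul_cancel₀ hWn]
      have hc := hcal (‖W‖⁻¹ • W) ht (fun i => if i ∈ S then 1 else 0)
      have hL : ∑ i, (((if i ∈ S then (1:ℤ) else 0) : ℤ) : ℝ) * ⟪w i, ‖W‖⁻¹ • W⟫_ℝ = ‖W‖ := by
        have h1 : ∀ i : Fin (n-1), (((if i ∈ S then (1:ℤ) else 0) : ℤ) : ℝ) * ⟪w i, ‖W‖⁻¹ • W⟫_ℝ
            = if i ∈ S then ⟪w i, ‖W‖⁻¹ • W⟫_ℝ else 0 := by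
          intro i; split <;> simp
        rw [Finset.sum_congr rfl (fun i _ => h1 i), Finset.sum_ite_mem, Finset.univ_inter,
          ← sum_inner, ← hWdef, real_inner_smul_right, real_inner_self_eq_norm_mul_norm]
        field_simp
      have hR : (⨆ i, |(((if i ∈ S then (1:ℤ) else 0) : ℤ) : ℝ)|) ≤ 1 := by
        refine ciSup_le fun i => ?_
        split <;> simp
      rw [hL] at hc
      exact hc.trans hR
  -- Step 2: extract the curves.
  choose crv hLip hinj h0 h1 himg using hnet
  have hcont : ∀ i, ContinuousOn (crv i) (Set.Icc 0 1) :=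
    fun i => (hLip i).choose_spec.continuousOn
  set g : ℕ → ℝ → Euc d := fun k => if hk : k < n - 1 then crv ⟨k, hk⟩ else fun _ => Q with hg
  have hgk : ∀ (k : ℕ) (hk : k < n - 1), g k = crv ⟨k, hk⟩ := by
    intro k hk; simp only [hg, dif_pos hk]
  have Hc : ∀ k, ContinuousOn (g k) (Set.Icc 0 1) := by
    intro k
    by_cases hk : k < n - 1
    · rw [hgk k hk]; exact hcont _
    · simp only [hg, dif_neg hk]; exact continuous_const.continuousOn
  have He : ∀ k, g k 1 = Q := by
    intro k
    by_cases hk : k < n - 1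
    · rw [hgk k hk]; exact h1 _
    · simp only [hg, dif_neg hk]
  -- Step 3: main induction over the tree.
  have claim : ∀ k, k ≤ n - 1 → ∀ σ : Fin (n - 1) → Euc d,
      (∀ i, σ i ∈ treeAux g Q k) →
      ENNReal.ofReal (∑ i, ⟪w i, Q - σ i⟫_ℝ)
        ≤ ∑ j ∈ Finset.range k, μH[1] (g j '' Set.Icc 0 (hitT g Q j)) := by
    intro k
    induction k with
    | zero =>
      intro _ σ hσ
      have hQ : ∀ i, σ i = Q := fun i => hσ i
      simp [hQ]
    | succ k ih =>
      intro hk1 σ hσ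
      have hk : k < n - 1 := hk1
      have hτmem := hitT_mem Hc He k
      set τ := hitT g Q k with hτdef
      set D : Finset (Fin (n - 1)) := Finset.univ.filter (fun i => σ i ∉ treeAux g Q k) with hD
      have hDmem : ∀ i, i ∈ D ↔ σ i ∉ treeAux g Q k := by
        intro i; simp [hD]
      have harc : ∀ i ∈ D, ∃ t, t ∈ Set.Icc (0:ℝ) τ ∧ g k t = σ i := by
        intro i hi
        have h2 := hσ i
        rw [treeAux_succ] at h2
        rcases h2 with h2 | h2
        · exact absurd h2 ((hDmem i).mp hi)
        · obtain ⟨t, ht, hgt⟩ := h2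
          exact ⟨t, ht, hgt⟩
      choose! s hs1 hs2 using harc
      set σ' : Fin (n - 1) → Euc d := fun i => if σ i ∈ treeAux g Q k then σ i else g k τ
        with hσ'def
      have hσ'mem : ∀ i, σ' i ∈ treeAux g Q k := by
        intro i
        by_cases hi : σ i ∈ treeAux g Q k
        · simpa [hσ'def, hi] using hi
        · simpa [hσ'def, hi] using hτmem.2
      have hsplit : (∑ i, ⟪w i, Q - σ i⟫_ℝ)
          = (∑ i, ⟪w i, Q - σ' i⟫_ℝ) + ∑ i ∈ D, ⟪w i, g k τ - σ i⟫_ℝ := by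
        have hpt : ∀ i : Fin (n - 1), ⟪w i, Q - σ i⟫_ℝ
            = ⟪w i, Q - σ' i⟫_ℝ + ⟪w i, σ' i - σ i⟫_ℝ := by
          intro i; rw [← inner_add_right, sub_add_sub_cancel]
        rw [Finset.sum_congr rfl (fun i _ => hpt i), Finset.sum_add_distrib]
        congr 1
        rw [← Finset.sum_subset D.subset_univ (fun i _ hiD => ?_)]
        · refine Finset.sum_congr rfl fun i hi => ?_
          have : σ' i = g k τ := by simp [hσ'def, (hDmem i).mp hi]
          rw [this]
        · have : σ' i = σ i := by
            have := (hDmem i).not.mp hiD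
            push_neg at this
            simp [hσ'def, this]
          rw [this, sub_self, inner_zero_right]
      rw [hsplit]
      refine le_trans ENNReal.ofReal_add_le ?_
      rw [Finset.sum_range_succ]
      refine add_le_add (ih (Nat.le_of_succ_le hk1) σ' hσ'mem) ?_
      have hEq : (∑ i ∈ D, ⟪w i, g k τ - σ i⟫_ℝ)
          = ⟪∑ i ∈ (∅ : Finset (Fin (n - 1))), w i, g k τ - g k 0⟫_ℝ
            + ∑ i ∈ D, ⟪w i, g k τ - g k (s i)⟫_ℝ := by
        simp only [Finset.sum_empty, inner_zero_left, zero_add]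
        exact Finset.sum_congr rfl fun i hi => by rw [hs2 i hi]
      rw [hEq]
      exact arc_flow (g k) (Hc k) (by rw [hgk k hk]; exact hinj ⟨k, hk⟩) w hw hτmem.1.2
        D.card D ∅ rfl (Finset.disjoint_right.mpr (by simp)) 0 s le_rfl hτmem.1.1
        (fun i hi => hs1 i hi)
  -- Step 4: the sources lie on the final tree.
  have hPmem : ∀ i : Fin (n - 1), P i ∈ treeAux g Q (n - 1) := by
    intro i
    have hi : (i : ℕ) < n - 1 := i.isLt
    have h0i : g (i : ℕ) 0 = P i := by
      rw [hgk _ hi]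
      rw [Fin.eta]
      exact h0 i
    have hPin : P i ∈ g (i : ℕ) '' Set.Icc 0 (hitT g Q i) :=
      ⟨0, ⟨le_rfl, (hitT_mem Hc He i).1.1⟩, h0i⟩
    have : P i ∈ treeAux g Q ((i : ℕ) + 1) := by
      rw [treeAux_succ]; exact Set.mem_union_right _ hPin
    exact treeAux_mono (by omega) this
  have step1 := claim (n - 1) le_rfl P hPmem
  -- Step 5: sum of arc measures is at most the measure of the network.
  have hmeasA : ∀ j ∈ Finset.range (n - 1),
      MeasurableSet (g j '' Set.Icc 0 (hitT g Q j)) := by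
    intro j hj
    exact (isCompact_Icc.image_of_continuousOn
      ((Hc j).mono (Set.Icc_subset_Icc le_rfl (hitT_mem Hc He j).1.2))).isClosed.measurableSet
  have hkey : ∀ j k : ℕ, j < k →
      μH[1] (g j '' Set.Icc 0 (hitT g Q j) ∩ g k '' Set.Icc 0 (hitT g Q k)) = 0 := by
    intro j k hjk
    refine measure_mono_null ?_ (singleton_null1 (g k (hitT g Q k)))
    intro x hx
    refine arc_inter_tree Hc He k ⟨hx.2, ?_⟩
    have h1 : g j '' Set.Icc 0 (hitT g Q j) ⊆ treeAux g Q (j + 1) := by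
      rw [treeAux_succ]; exact Set.subset_union_right
    exact treeAux_mono hjk (h1 hx.1)
  have step2 : ∑ j ∈ Finset.range (n - 1), μH[1] (g j '' Set.Icc 0 (hitT g Q j))
      ≤ μH[1] (⋃ i, lam i) := by
    refine le_trans (sum_measure_le _ _ _ hmeasA ?_) (measure_mono ?_)
    · intro j _ k _ hjk
      rcases Nat.lt_or_ge j k with h | h
      · exact hkey j k h
      · have h' : k < j := lt_of_le_of_ne h (fun hh => hjk hh.symm)
        rw [Set.inter_comm]
        exact hkey k j h'
    · intro x hx
      simp only [Set.mem_iUnion] at hx ⊢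
      obtain ⟨j, hj, hxj⟩ := hx
      simp only [Finset.mem_range] at hj
      refine ⟨⟨j, hj⟩, ?_⟩
      rw [himg ⟨j, hj⟩]
      have : g j '' Set.Icc 0 (hitT g Q j) ⊆ g j '' Set.Icc 0 1 :=
        Set.image_mono (Set.Icc_subset_Icc le_rfl (hitT_mem Hc He j).1.2)
      have hxj' := this hxj
      rwa [hgk j hj] at hxj'
  exact le_trans step1 step2


end
end

section
/- Let n ≥ 3 and let e_1, …, e_n be the standard orthonormal basis of ℝ^n. Define w_1, …, w_n ∈ ℝ^n by w_1 = (1/2)e_1 + (√3/2)e_2, w_2 = (1/2)e_1 − (√3/2)e_2, w_3 = −(1/2)e_1 − (√3/2)e_3, and, for 4 ≤ k ≤ n, w_k = −2^{2−k} e_1 + √3·2^{2−k} e_3 + √3·Σ_{j=4}^{k−1} 2^{j−1−k} e_j − (√3/2) e_k. Then, with respect to the Euclidean norm, ‖w_k‖ = 1 for every 1 ≤ k ≤ n, and ‖w_1 + w_2 + ⋯ + w_k‖ = 1 for every 1 ≤ k ≤ n. -/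
open MeasureTheory Finset Set
open scoped InnerProductSpace

noncomputable section

def wcf (k i : ℕ) : ℝ :=
  if k = 0 then (if i = 0 then 1/2 else if i = 1 then Real.sqrt 3/2 else 0)
  else if k = 1 then (if i = 0 then 1/2 else if i = 1 then -(Real.sqrt 3/2) else 0)
  else if k = 2 then (if i = 0 then -(1/2 : ℝ) else if i = 2 then -(Real.sqrt 3/2) else 0)
  else (if i = 0 then -(2/2^k) else if i = 2 then Real.sqrt 3*(2/2^k)
        else if 3 ≤ i ∧ i < k then Real.sqrt 3*(2^i/(2*2^k))
        else if i = k then -(Real.sqrt 3/2) else 0)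

/-- coefficients of `w 0 + ⋯ + w K` (0-indexed). -/
def scf (K i : ℕ) : ℝ :=
  if K = 0 then (if i = 0 then 1/2 else if i = 1 then Real.sqrt 3/2 else 0)
  else if K = 1 then (if i = 0 then 1 else 0)
  else (if i = 0 then 2/2^K else if i = 2 then -(Real.sqrt 3*(2/2^K))
        else if 3 ≤ i ∧ i ≤ K then -(Real.sqrt 3*(2^i/(2*2^K))) else 0)

set_option maxHeartbeats 2000000 in
lemma scf_succ (K i : ℕ) : scf (K+1) i = scf K i + wcf (K+1) i := by
  have h2 : (2:ℝ)^K ≠ 0 := by positivity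
  unfold scf wcf
  rcases Nat.lt_or_ge K 2 with hK | hK
  · interval_cases K <;> split_ifs <;> first | omega | contradiction | (subst_vars; field_simp; try ring)
  · have hK0 : K ≠ 0 := by omega
    have hK1 : K ≠ 1 := by omega
    have hK1' : K + 1 ≠ 1 := by omega
    have hK2' : K + 1 ≠ 2 := by omega
    simp only [hK0, hK1, Nat.succ_ne_zero, hK1', hK2', if_false, pow_succ]
    split_ifs <;> first | omega | contradiction | (subst_vars; field_simp; try ring)

lemma pow_two_sq (i : ℕ) : ((2:ℝ)^i)^2 = 4^i := by
  rw [← pow_mul, mul_comm, pow_mul]; norm_num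

lemma sq3 : Real.sqrt 3 ^ 2 = 3 := Real.sq_sqrt (by norm_num)


lemma head3 (f : ℕ → ℝ) : ∑ i ∈ Finset.Ico 0 3, f i = f 0 + f 1 + f 2 := by
  rw [Nat.Ico_zero_eq_range, Finset.sum_range_succ, Finset.sum_range_succ,
    Finset.sum_range_one]


lemma sum_sq_wcf {k n : ℕ} (hk : k < n) (hn : 3 ≤ n) :
    ∑ i ∈ Finset.range n, (wcf k i)^2 = 1 := by
  rw [Finset.range_eq_Ico, ← Finset.sum_Ico_consecutive _ (Nat.zero_le 3) hn, head3]
  rcases Nat.lt_or_ge k 3 with h3k | h3k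
  · have htail : ∑ i ∈ Finset.Ico 3 n, (wcf k i)^2 = 0 := by
      refine Finset.sum_eq_zero fun i hi => ?_
      simp only [Finset.mem_Ico] at hi
      unfold wcf; split_ifs <;> first | omega | contradiction | norm_num
    rw [htail]
    interval_cases k <;> unfold wcf <;> norm_num [div_pow, sq3]
  · have hk0 : k ≠ 0 := by omega
    have hk1 : k ≠ 1 := by omega
    have hk2 : k ≠ 2 := by omega
    have h20 : (2:ℝ)^k ≠ 0 := by positivity
    have hw0 : wcf k 0 = -(2/2^k) := by
      unfold wcf; split_ifs <;> first | omega | contradiction | rfl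
    have hw1 : wcf k 1 = 0 := by
      unfold wcf; split_ifs <;> first | omega | contradiction | rfl
    have hw2 : wcf k 2 = Real.sqrt 3 * (2/2^k) := by
      unfold wcf; split_ifs <;> first | omega | contradiction | rfl
    have hwk : wcf k k = -(Real.sqrt 3/2) := by
      unfold wcf; split_ifs <;> first | omega | contradiction | rfl
    have hmid : ∑ i ∈ Finset.Ico 3 k, (wcf k i)^2
        = 3/(2*2^k)^2 * (((4:ℝ)^k - 4^3)/(4-1)) := by
      rw [← geom_sum_Ico (by norm_num : (4:ℝ) ≠ 1) h3k, Finset.mul_sum]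
      refine Finset.sum_congr rfl fun i hi => ?_
      simp only [Finset.mem_Ico] at hi
      unfold wcf
      rw [if_neg hk0, if_neg hk1, if_neg hk2, if_neg (by omega), if_neg (by omega),
        if_pos (by omega), mul_pow, sq3, div_pow, pow_two_sq]
      ring
    rw [← Finset.sum_Ico_consecutive _ h3k (le_of_lt hk),
      ← Finset.sum_Ico_consecutive _ (Nat.le_succ k) hk,
      Nat.Ico_succ_singleton, Finset.sum_singleton]
    have htail : ∑ i ∈ Finset.Ico (k+1) n, (wcf k i)^2 = 0 := by
      refine Finset.sum_eq_zero fun i hi => ?_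
      simp only [Finset.mem_Ico] at hi
      unfold wcf; split_ifs <;> first | omega | contradiction | norm_num
    rw [htail, hmid, hw0, hw1, hw2, hwk]
    simp only [neg_sq, mul_pow, div_pow, sq3]
    rw [← pow_two_sq k]
    field_simp
    ring

lemma sum_sq_scf {K n : ℕ} (hK : K < n) (hn : 3 ≤ n) :
    ∑ i ∈ Finset.range n, (scf K i)^2 = 1 := by
  rw [Finset.range_eq_Ico, ← Finset.sum_Ico_consecutive _ (Nat.zero_le 3) hn, head3]
  rcases Nat.lt_or_ge K 2 with h2K | h2K
  · have htail : ∑ i ∈ Finset.Ico 3 n, (scf K i)^2 = 0 := by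
      refine Finset.sum_eq_zero fun i hi => ?_
      simp only [Finset.mem_Ico] at hi
      unfold scf; split_ifs <;> first | omega | contradiction | norm_num
    rw [htail]
    interval_cases K <;> unfold scf <;> norm_num [div_pow, sq3]
  · have hK0 : K ≠ 0 := by omega
    have hK1 : K ≠ 1 := by omega
    have h20 : (2:ℝ)^K ≠ 0 := by positivity
    have hs0 : scf K 0 = 2/2^K := by
      unfold scf; split_ifs <;> first | omega | contradiction | rfl
    have hs1 : scf K 1 = 0 := by
      unfold scf; split_ifs <;> first | omega | contradiction | rfl
    have hs2 : scf K 2 = -(Real.sqrt 3 * (2/2^K)) := by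
      unfold scf; split_ifs <;> first | omega | contradiction | rfl
    have hmid : ∑ i ∈ Finset.Ico 3 (K+1), (scf K i)^2
        = 3/(2*2^K)^2 * (((4:ℝ)^(K+1) - 4^3)/(4-1)) := by
      rw [← geom_sum_Ico (by norm_num : (4:ℝ) ≠ 1) (by omega), Finset.mul_sum]
      refine Finset.sum_congr rfl fun i hi => ?_
      simp only [Finset.mem_Ico] at hi
      unfold scf
      rw [if_neg hK0, if_neg hK1, if_neg (by omega), if_neg (by omega),
        if_pos (by omega), neg_sq, mul_pow, sq3, div_pow, pow_two_sq]
      ring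
    rw [← Finset.sum_Ico_consecutive _ (by omega : 3 ≤ K+1) (by omega : K+1 ≤ n)]
    have htail : ∑ i ∈ Finset.Ico (K+1) n, (scf K i)^2 = 0 := by
      refine Finset.sum_eq_zero fun i hi => ?_
      simp only [Finset.mem_Ico] at hi
      unfold scf; split_ifs <;> first | omega | contradiction | norm_num
    rw [htail, hmid, hs0, hs1, hs2]
    simp only [neg_sq, mul_pow, div_pow, sq3]
    rw [show (4:ℝ)^(K+1) = 4*((2:ℝ)^K)^2 by rw [pow_two_sq, pow_succ]; ring]
    field_simp
    ring


set_option maxHeartbeats 1000000 in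
/-- the components `w_1, …, w_n` of the constant calibration form for the Steiner
tree problem are unit vectors, and all partial sums `w_1 + ⋯ + w_k` are unit vectors. -/
theorem stmt11 (n : ℕ) (hn : 3 ≤ n) (w : Fin n → Euc n)
    (h1 : w ⟨0, by omega⟩
        = (1 / 2 : ℝ) • EuclideanSpace.single (⟨0, by omega⟩ : Fin n) 1
          + (Real.sqrt 3 / 2) • EuclideanSpace.single (⟨1, by omega⟩ : Fin n) 1)
    (h2 : w ⟨1, by omega⟩
        = (1 / 2 : ℝ) • EuclideanSpace.single (⟨0, by omega⟩ : Fin n) 1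
          - (Real.sqrt 3 / 2) • EuclideanSpace.single (⟨1, by omega⟩ : Fin n) 1)
    (h3 : w ⟨2, by omega⟩
        = -((1 / 2 : ℝ) • EuclideanSpace.single (⟨0, by omega⟩ : Fin n) 1)
          - (Real.sqrt 3 / 2) • EuclideanSpace.single (⟨2, by omega⟩ : Fin n) 1)
    (h4 : ∀ k : Fin n, 3 ≤ k.val →
        w k = (-((2 : ℝ) ^ (1 - (k.val : ℤ)))) •
                EuclideanSpace.single (⟨0, by omega⟩ : Fin n) 1
          + (Real.sqrt 3 * (2 : ℝ) ^ (1 - (k.val : ℤ))) •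
                EuclideanSpace.single (⟨2, by omega⟩ : Fin n) 1
          + (∑ j ∈ Finset.univ.filter (fun j : Fin n => 3 ≤ j.val ∧ j.val < k.val),
              (Real.sqrt 3 * (2 : ℝ) ^ ((j.val : ℤ) - (k.val : ℤ) - 1)) •
                EuclideanSpace.single j 1)
          - (Real.sqrt 3 / 2) • EuclideanSpace.single k 1) :
    (∀ k, ‖w k‖ = 1) ∧
    (∀ k : Fin n, ‖∑ j ∈ Finset.univ.filter (fun j : Fin n => j ≤ k), w j‖ = 1) := by
  classical
  have heval : ∀ k i : Fin n, w k i = wcf k.val i.val := by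
    intro k i
    rcases Nat.lt_or_ge k.val 3 with hk3 | hk3
    · interval_cases hkv : k.val
      · have hk : k = ⟨0, by omega⟩ := Fin.ext hkv
        rw [hk, h1]
        simp only [PiLp.add_apply, PiLp.smul_apply, EuclideanSpace.single_apply,
          smul_eq_mul, wcf, if_pos rfl, Fin.ext_iff]
        split_ifs <;> first | omega | contradiction | ring
      · have hk : k = ⟨1, by omega⟩ := Fin.ext hkv
        rw [hk, h2]
        simp only [PiLp.sub_apply, PiLp.smul_apply, EuclideanSpace.single_apply,
          smul_eq_mul, wcf, Fin.ext_iff]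
        split_ifs <;> first | omega | contradiction | ring
      · have hk : k = ⟨2, by omega⟩ := Fin.ext hkv
        rw [hk, h3]
        simp only [PiLp.sub_apply, PiLp.neg_apply, PiLp.smul_apply,
          EuclideanSpace.single_apply, smul_eq_mul, wcf, Fin.ext_iff]
        split_ifs <;> first | omega | contradiction | ring
    · rw [h4 k hk3]
      have hz1 : (2:ℝ) ^ (1 - (k.val : ℤ)) = 2/2^k.val := by
        rw [zpow_sub₀ (by norm_num : (2:ℝ) ≠ 0), zpow_one, zpow_natCast]
      have hz2 : ∀ j : ℕ, (2:ℝ) ^ ((j : ℤ) - (k.val : ℤ) - 1) = 2^j/(2*2^k.val) := by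
        intro j
        rw [show ((j:ℤ) - (k.val:ℤ) - 1) = (j:ℤ) - ((k.val+1 : ℕ) : ℤ) by push_cast; ring,
          zpow_sub₀ (by norm_num : (2:ℝ) ≠ 0), zpow_natCast, zpow_natCast, pow_succ]
        ring
      have hsum : ∀ (s : Finset (Fin n)) (f : Fin n → Euc n) (i : Fin n),
          (∑ j ∈ s, f j) i = ∑ j ∈ s, f j i := fun s f i => by
            rw [WithLp.ofLp_sum, Finset.sum_apply]
      simp only [PiLp.add_apply, PiLp.sub_apply, PiLp.smul_apply,
        EuclideanSpace.single_apply, smul_eq_mul, hz1, hz2, mul_ite, mul_one, mul_zero]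
      rw [hsum]
      simp only [PiLp.smul_apply, EuclideanSpace.single_apply, smul_eq_mul,
        mul_ite, mul_one, mul_zero]
      rw [Finset.sum_ite_eq]
      simp only [Finset.mem_filter, Finset.mem_univ, true_and]
      unfold wcf
      simp only [Fin.ext_iff]
      split_ifs <;> first | omega | contradiction | ring
  set W : ℕ → Euc n := fun m => if h : m < n then w ⟨m, h⟩ else 0 with hWdef
  have hWev : ∀ (m : ℕ) (h : m < n) (i : Fin n), W m i = wcf m i.val := by
    intro m h i
    have : W m = w ⟨m, h⟩ := dif_pos h
    rw [this, heval ⟨m, h⟩ i]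
  have hS : ∀ K : ℕ, K < n → ∀ i : Fin n,
      (∑ m ∈ Finset.range (K+1), W m) i = scf K i.val := by
    intro K
    induction K with
    | zero =>
      intro hK i
      rw [Finset.sum_range_one, hWev 0 hK i]
      rfl
    | succ K ih =>
      intro hK i
      rw [Finset.sum_range_succ, PiLp.add_apply, ih (by omega) i,
        hWev (K+1) hK i, scf_succ]
  have hconv : ∀ k : Fin n, ∑ j ∈ Finset.univ.filter (fun j : Fin n => j ≤ k), w j
      = ∑ m ∈ Finset.range (k.val+1), W m := by
    intro k
    rw [Finset.sum_filter]
    have e1 : (∑ j : Fin n, if j ≤ k then w j else 0)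
        = ∑ j : Fin n, (fun m : ℕ => if m ≤ k.val then W m else 0) j.val :=
      Finset.sum_congr rfl fun j _ => by
        simp only [Fin.le_def]
        split_ifs with h
        · exact ((dif_pos j.isLt).trans (by rw [Fin.eta])).symm
        · rfl
    rw [e1]
    have hkn : k.val < n := k.isLt
    refine (Fin.sum_univ_eq_sum_range (fun m : ℕ => if m ≤ k.val then W m else 0) n).trans ?_
    refine (Finset.sum_subset (Finset.range_subset_range.2 (by omega : k.val + 1 ≤ n)) ?_).symm.trans ?_
    · intro m hm hm'
      simp only [Finset.mem_range] at hm hm'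
      exact if_neg (by omega)
    · refine Finset.sum_congr rfl fun m hm => ?_
      simp only [Finset.mem_range] at hm
      exact if_pos (by omega)
  constructor
  · intro k
    rw [EuclideanSpace.norm_eq]
    have : ∑ i : Fin n, ‖w k i‖^2 = ∑ i ∈ Finset.range n, (wcf k.val i)^2 := by
      refine Eq.trans ?_ (Fin.sum_univ_eq_sum_range (fun m => (wcf k.val m)^2) n)
      exact Finset.sum_congr rfl fun i _ => by
        rw [heval k i, Real.norm_eq_abs, sq_abs]
    rw [this, sum_sq_wcf k.isLt hn, Real.sqrt_one]
  · intro k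
    rw [hconv k, EuclideanSpace.norm_eq]
    have : ∑ i : Fin n, ‖(∑ m ∈ Finset.range (k.val+1), W m) i‖^2
        = ∑ i ∈ Finset.range n, (scf k.val i)^2 := by
      refine Eq.trans ?_ (Fin.sum_univ_eq_sum_range (fun m => (scf k.val m)^2) n)
      exact Finset.sum_congr rfl fun i _ => by
        rw [hS k.val k.isLt i, Real.norm_eq_abs, sq_abs]
    rw [this, sum_sq_scf k.isLt hn, Real.sqrt_one]

end
end

section
/- Let d ≥ 2 and let u, v_1, …, v_d ∈ ℝ^d satisfy ‖u‖ = 1 and ⟨u, v_j⟩ = 0 for every j = 1, …, d. Define J ∈ ℝ^d by letting J_k be the determinant of the d×d matrix whose columns are v_1, …, v_{k−1}, u, v_{k+1}, …, v_d (i.e. the k-th column v_k is replaced by u). Then ‖J‖ ≤ (d−1)^{−(d−1)/2} · (Σ_{j=1}^d ‖v_j‖²)^{(d−1)/2}, where ‖·‖ denotes the Euclidean norm. -/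
open MeasureTheory Finset Set
open scoped InnerProductSpace

section AuxStmt12
open Matrix
lemma amgm (n : ℕ) (hn : 0 < n) (f : Fin n → ℝ) (hf : ∀ i, 0 ≤ f i) :
    ∏ i, f i ≤ ((∑ i, f i) / n) ^ n := by
  have hn' : (0:ℝ) < n := Nat.cast_pos.mpr hn
  have h1 : ∏ i, (f i) ^ ((n:ℝ)⁻¹) ≤ ∑ i : Fin n, (n:ℝ)⁻¹ * f i :=
    Real.geom_mean_le_arith_mean_weighted Finset.univ (fun _ => (n:ℝ)⁻¹) f
        (fun _ _ => by positivity)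
        (by simp [Finset.sum_const, Finset.card_univ]; field_simp)
        (fun i _ => hf i)
  have h2 : (∏ i, f i) ^ ((n:ℝ)⁻¹) = ∏ i, (f i) ^ ((n:ℝ)⁻¹) :=
    (Real.finset_prod_rpow Finset.univ f (fun i _ => hf i) _)|>.symm
  have h3 : ∑ i : Fin n, (n:ℝ)⁻¹ * f i = (∑ i, f i) / n := by
    rw [← Finset.mul_sum]; ring
  have h4 : (∏ i, f i) ^ ((n:ℝ)⁻¹) ≤ (∑ i, f i) / n := by rw [h2]; rw [h3] at h1; exact h1
  have hp : (0:ℝ) ≤ ∏ i, f i := Finset.prod_nonneg (fun i _ => hf i)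
  calc ∏ i, f i = (((∏ i, f i) ^ ((n:ℝ)⁻¹)) ^ (n:ℝ)) := by
        rw [← Real.rpow_mul hp, inv_mul_cancel₀ (ne_of_gt hn'), Real.rpow_one]
    _ ≤ ((∑ i, f i) / n) ^ (n:ℝ) := by
        apply Real.rpow_le_rpow (Real.rpow_nonneg hp _) h4 hn'.le
    _ = ((∑ i, f i) / n) ^ n := Real.rpow_natCast _ n


open Finset Matrix

lemma trace_eq_sum_eig {n : ℕ} (P : Matrix (Fin n) (Fin n) ℝ) (hH : P.IsHermitian) :
    P.trace = ∑ i, hH.eigenvalues i := by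
  simpa using hH.trace_eq_sum_eigenvalues

lemma psd_det_le_trace_pow {n : ℕ} (hn : 0 < n) (P : Matrix (Fin n) (Fin n) ℝ)
    (hP : P.PosSemidef) : P.det ≤ (P.trace / n) ^ n := by
  have hH := hP.1
  have hdet : P.det = ∏ i, hH.eigenvalues i := by
    have := hH.det_eq_prod_eigenvalues
    simpa using this
  have htr := trace_eq_sum_eig P hH
  rw [hdet, htr]
  exact amgm n hn _ (fun i => hP.eigenvalues_nonneg i)


lemma det_add_outer {n : ℕ} (M : Matrix (Fin n) (Fin n) ℝ) (u c : Fin n → ℝ) :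
    (Matrix.of fun i j => M i j + c j * u i).det
      = M.det + ∑ k, c k * (M.updateCol k u).det := by
  classical
  set g : Finset (Fin n) → Matrix (Fin n) (Fin n) ℝ :=
    fun s => Matrix.of fun i j => if j ∈ s then M i j + c j * u i else M i j with hg
  -- sublemma
  have sub : ∀ s : Finset (Fin n), ∀ k ∉ s,
      ((g s).updateCol k u).det = (M.updateCol k u).det := by
    intro s
    induction s using Finset.induction_on with
    | empty =>
      intro k _
      have : g ∅ = M := by ext i j; simp [hg]
      rw [this]
    | @insert j s hjs ih =>
      intro k hk
      have hjk : j ≠ k := fun h => hk (h ▸ Finset.mem_insert_self j s)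
      have hks : k ∉ s := fun h => hk (Finset.mem_insert_of_mem h)
      have heq : (g (insert j s)).updateCol k u
          = (((g s).updateCol k u).updateCol j (fun i => M i j + c j * u i)) := by
        ext i l
        by_cases hlk : l = k
        · subst hlk
          simp [Matrix.updateCol_apply, hjk.symm]
        · by_cases hlj : l = j
          · subst hlj
            simp [Matrix.updateCol_apply, hlk, hg, hjs]
          · simp [Matrix.updateCol_apply, hlk, hlj, hg, Finset.mem_insert, hlj]
      rw [heq]
      have hsplit := Matrix.det_updateCol_add ((g s).updateCol k u) j
        (fun i => M i j) (fun i => c j * u i)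
      have : (fun i => M i j + c j * u i) = (fun i => M i j) + (fun i => c j * u i) := rfl
      rw [this, hsplit]
      have h2 : (((g s).updateCol k u).updateCol j fun i => c j * u i).det = 0 := by
        have : (fun i => c j * u i) = c j • u := rfl
        rw [this, Matrix.det_updateCol_smul]
        have : (((g s).updateCol k u).updateCol j u).det = 0 := by
          apply Matrix.det_zero_of_column_eq hjk
          intro i
          simp [Matrix.updateCol_apply, hjk, hjk.symm]
        rw [this, mul_zero]
      have h3 : (((g s).updateCol k u).updateCol j fun i => M i j)
          = (g s).updateCol k u := by
        ext i l
        by_cases hlj : l = j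
        · subst hlj
          simp [Matrix.updateCol_apply, hjk, hg, hjs]
        · simp [Matrix.updateCol_apply, hlj]
      rw [h2, h3, add_zero, ih k hks]
  -- main induction
  have main : ∀ s : Finset (Fin n),
      (g s).det = M.det + ∑ k ∈ s, c k * (M.updateCol k u).det := by
    intro s
    induction s using Finset.induction_on with
    | empty =>
      have : g ∅ = M := by ext i j; simp [hg]
      rw [this]; simp
    | @insert k s hks ih =>
      have heq : g (insert k s) = (g s).updateCol k (fun i => M i k + c k * u i) := by
        ext i l
        by_cases hlk : l = k
        · subst hlk; simp [Matrix.updateCol_apply, hg]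
        · simp [Matrix.updateCol_apply, hlk, hg, Finset.mem_insert]
      rw [heq]
      have : (fun i => M i k + c k * u i) = (fun i => M i k) + (fun i => c k * u i) := rfl
      rw [this, Matrix.det_updateCol_add]
      have h2 : ((g s).updateCol k fun i => c k * u i).det
          = c k * (M.updateCol k u).det := by
        have : (fun i => c k * u i) = c k • u := rfl
        rw [this, Matrix.det_updateCol_smul, sub s k hks]
      have h3 : ((g s).updateCol k fun i => M i k) = g s := by
        ext i l
        by_cases hlk : l = k
        · subst hlk; simp [Matrix.updateCol_apply, hg, hks]
        · simp [Matrix.updateCol_apply, hlk]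
      rw [h2, h3, ih, Finset.sum_insert hks]
      ring
  have := main Finset.univ
  have huniv : g Finset.univ = Matrix.of fun i j => M i j + c j * u i := by
    ext i j; simp [hg]
  rwa [huniv] at this
end AuxStmt12

noncomputable section

set_option maxHeartbeats 1000000 in
/-- the pointwise algebraic bound on the pre-jacobian: if `u` is a unit vector
orthogonal to `v_1, …, v_d`, then the vector of determinants obtained by replacing each column
of `(v_1 … v_d)` by `u` has Euclidean norm at most
`(d-1)^{-(d-1)/2} (Σ_j ‖v_j‖²)^{(d-1)/2}`. -/
theorem stmt12 (d : ℕ) (hd : 2 ≤ d) (u : Euc d) (v : Fin d → Euc d)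
    (hu : ‖u‖ = 1) (hv : ∀ j, ⟪u, v j⟫_ℝ = 0) :
    Real.sqrt (∑ k : Fin d, (Matrix.det (Matrix.of fun i j : Fin d =>
        if j = k then u i else v j i)) ^ 2)
      ≤ ((d : ℝ) - 1) ^ (-(((d : ℝ) - 1) / 2)) *
        (∑ j : Fin d, ‖v j‖ ^ 2) ^ (((d : ℝ) - 1) / 2) := by
  classical
  set m : ℕ := d - 1 with hm
  set D : ℝ := (d : ℝ) - 1 with hDdef
  have hd1 : (1:ℝ) ≤ (d:ℝ) := by exact_mod_cast Nat.one_le_of_lt hd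
  have hD : 0 < D := by
    have : (2:ℝ) ≤ (d:ℝ) := by exact_mod_cast hd
    simp only [hDdef]; linarith
  have hmD : (m : ℝ) = D := by
    rw [hm, hDdef, Nat.cast_sub (le_trans one_le_two hd), Nat.cast_one]
  set S : ℝ := ∑ j, ‖v j‖ ^ 2 with hSdef
  have hS0 : 0 ≤ S := Finset.sum_nonneg fun j _ => sq_nonneg _
  -- coordinate facts
  have hnorm : ∀ x : Euc d, ‖x‖ ^ 2 = ∑ i, x i ^ 2 := by
    intro x
    rw [EuclideanSpace.norm_eq, Real.sq_sqrt (Finset.sum_nonneg fun i _ => sq_nonneg _)]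
    simp [Real.norm_eq_abs, sq_abs]
  have hinner : ∀ j, ∑ i, u i * v j i = 0 := by
    intro j
    have := hv j
    simpa [PiLp.inner_apply, RCLike.inner_apply, conj_trivial, mul_comm] using this
  have hu2 : ∑ i, u i ^ 2 = 1 := by
    have := hnorm u
    rw [hu] at this; simpa using this.symm
  have hune : u ≠ 0 := by
    intro h; rw [h, norm_zero] at hu; exact one_ne_zero hu.symm
  set Jf : Fin d → ℝ := fun k => (Matrix.of fun i j : Fin d =>
      if j = k then u i else v j i).det with hJf
  have hRHS : D ^ (-(D/2)) * S ^ (D/2) = (S/D) ^ (D/2) := by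
    rw [Real.div_rpow hS0 hD.le, Real.rpow_neg hD.le]; ring
  rw [hRHS]
  rcases eq_or_lt_of_le hS0 with hS | hS
  · -- S = 0 : all v j = 0
    have hvz : ∀ j, v j = 0 := by
      intro j
      have hj : ‖v j‖ ^ 2 = 0 := by
        have := (Finset.sum_eq_zero_iff_of_nonneg (fun j _ => sq_nonneg ‖v j‖)).1 hS.symm
        exact this j (Finset.mem_univ j)
      have : ‖v j‖ = 0 := by nlinarith [sq_nonneg ‖v j‖]
      exact norm_eq_zero.mp this
    have hJz : ∀ k : Fin d, (Matrix.det (Matrix.of fun i j : Fin d =>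
        if j = k then u i else v j i)) ^ 2 = 0 := by
      intro k
      have hex : ∃ j : Fin d, j ≠ k := by
        haveI : Nontrivial (Fin d) := Fin.nontrivial_iff_two_le.mpr hd
        exact exists_ne k
      rcases hex with ⟨j, hj⟩
      have : (Matrix.of fun i j : Fin d => if j = k then u i else v j i).det = 0 := by
        apply Matrix.det_eq_zero_of_column_eq_zero j
        intro i
        simp only [Matrix.of_apply, if_neg hj]
        rw [hvz j]; rfl
      rw [this]; ring
    rw [Finset.sum_eq_zero (fun k _ => hJz k), Real.sqrt_zero]
    exact Real.rpow_nonneg (div_nonneg hS0 hD.le) _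
  · -- S > 0
    set t : ℝ := Real.sqrt (D / S) with htdef
    have ht : 0 < t := Real.sqrt_pos.mpr (div_pos hD hS)
    have ht2 : t ^ 2 = D / S := Real.sq_sqrt (div_pos hD hS).le
    set M' : Matrix (Fin d) (Fin d) ℝ := Matrix.of fun i j => t * v j i with hM'
    set Jf' : Fin d → ℝ := fun k => (M'.updateCol k (fun i => u i)).det with hJf'
    have hscale : ∀ k, Jf' k = t ^ m * Jf k := by
      intro k
      have heq : M'.updateCol k (fun i => u i)
          = Matrix.of fun i j => (if j = k then 1 else t) *
              ((Matrix.of fun i j : Fin d => if j = k then u i else v j i) i j) := by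
        ext i j
        by_cases hjk : j = k
        · subst hjk; simp [Matrix.updateCol_apply, hM']
        · simp [Matrix.updateCol_apply, hjk, hM']
      show (M'.updateCol k fun i => u i).det = t ^ m * Jf k
      rw [heq, Matrix.det_mul_row]
      have hJfk : Jf k = (Matrix.of fun i j : Fin d => if j = k then u i else v j i).det := rfl
      rw [hJfk]
      congr 1
      rw [← Finset.prod_erase_mul Finset.univ _ (Finset.mem_univ k), if_pos rfl, mul_one]
      rw [Finset.prod_congr rfl (fun j hj => if_neg (Finset.ne_of_mem_erase hj)),
        Finset.prod_const, Finset.card_erase_of_mem (Finset.mem_univ k),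
        Finset.card_univ, Fintype.card_fin]
    set Q : ℝ := ∑ k, Jf' k ^ 2 with hQdef
    have hQ0 : 0 ≤ Q := Finset.sum_nonneg fun k _ => sq_nonneg _
    have key : Q ≤ 1 := by
      rcases eq_or_lt_of_le hQ0 with hQ | hQpos
      · rw [← hQ]; norm_num
      · set r : ℝ := Real.sqrt Q with hrdef
        have hr : 0 < r := Real.sqrt_pos.mpr hQpos
        have hr2 : r ^ 2 = Q := Real.sq_sqrt hQ0
        set c : Fin d → ℝ := fun k => Jf' k / r with hc
        set A : Matrix (Fin d) (Fin d) ℝ := Matrix.of fun i j => M' i j + c j * u i with hA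
        have hdetM' : M'.det = 0 := by
          rw [← Matrix.exists_vecMul_eq_zero_iff]
          refine ⟨fun i => u i, ?_, ?_⟩
          · intro h
            apply hune
            ext i
            exact congrFun h i
          · funext j
            simp only [Matrix.vecMul, dotProduct, hM', Matrix.of_apply]
            have : ∑ i, u i * (t * v j i) = t * ∑ i, u i * v j i := by
              rw [Finset.mul_sum]; congr 1; funext i; ring
            rw [this, hinner j, mul_zero]
            rfl
        have hdetA : A.det = r := by
          have hexp := det_add_outer M' (fun i => u i) c
          have : A.det = M'.det + ∑ k, c k * (M'.updateCol k (fun i => u i)).det := hexp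
          rw [this, hdetM', zero_add]
          have : ∑ k, c k * (M'.updateCol k (fun i => u i)).det
              = (∑ k, Jf' k ^ 2) / r := by
            rw [Finset.sum_div]
            refine Finset.sum_congr rfl fun k _ => ?_
            rw [hc]
            have : (M'.updateCol k (fun i => u i)).det = Jf' k := rfl
            rw [this]; ring
          rw [this, ← hQdef, ← hr2]
          field_simp
        have hP : (A.conjTranspose * A).PosSemidef := Matrix.posSemidef_conjTranspose_mul_self A
        have hdetP : (A.conjTranspose * A).det = Q := by
          rw [Matrix.det_mul, Matrix.det_conjTranspose, star_trivial, hdetA, ← hr2]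
          ring
        have htr : (A.conjTranspose * A).trace = d := by
          have hentry : ∀ j, (A.conjTranspose * A) j j = ∑ i, (A i j) ^ 2 := by
            intro j
            simp only [Matrix.mul_apply, Matrix.conjTranspose_apply, star_trivial, sq]
          have hcol : ∀ j, ∑ i, (A i j) ^ 2 = t ^ 2 * ‖v j‖ ^ 2 + c j ^ 2 := by
            intro j
            have hAij : ∀ i, A i j = t * v j i + c j * u i := fun i => rfl
            have : ∑ i, (A i j) ^ 2
                = ∑ i, (t^2 * (v j i)^2 + (2 * t * c j) * (u i * v j i) + c j ^2 * (u i)^2) := by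
              refine Finset.sum_congr rfl fun i _ => ?_
              rw [hAij i]; ring
            rw [this, Finset.sum_add_distrib, Finset.sum_add_distrib,
              ← Finset.mul_sum, ← Finset.mul_sum, ← Finset.mul_sum,
              hinner j, hu2, hnorm (v j)]
            ring
          have hsumc : ∑ j, c j ^ 2 = 1 := by
            have : ∑ j, c j ^ 2 = Q / r ^ 2 := by
              rw [hQdef, Finset.sum_div]
              refine Finset.sum_congr rfl fun k _ => ?_
              rw [hc]; ring
            rw [this, hr2, div_self (ne_of_gt hQpos)]
          have : (A.conjTranspose * A).trace = ∑ j, (t ^ 2 * ‖v j‖ ^ 2 + c j ^ 2) := by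
            rw [Matrix.trace]
            refine Finset.sum_congr rfl fun j _ => ?_
            rw [Matrix.diag_apply, hentry j, hcol j]
          rw [this, Finset.sum_add_distrib, hsumc, ← Finset.mul_sum, ← hSdef, ht2]
          rw [div_mul_cancel₀ _ (ne_of_gt hS)]
          rw [hDdef]; ring
        have := psd_det_le_trace_pow (lt_of_lt_of_le two_pos hd) _ hP
        rw [hdetP, htr] at this
        have hdd : ((d:ℝ) / d) = 1 := div_self (Nat.cast_ne_zero.mpr (by omega))
        rw [hdd, one_pow] at this
        exact this
    -- conclude
    have hsum : ∑ k, Jf k ^ 2 ≤ (S / D) ^ m := by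
      have heach : ∀ k, Jf k ^ 2 = Jf' k ^ 2 / (D/S) ^ m := by
        intro k
        rw [hscale k, mul_pow, ← pow_mul, mul_comm m 2, pow_mul, ht2]
        field_simp
      have hsum2 : ∑ k, Jf k ^ 2 = Q / (D/S) ^ m := by
        rw [hQdef, Finset.sum_div]
        exact Finset.sum_congr rfl fun k _ => heach k
      rw [hsum2]
      have hpow : (0:ℝ) < (D/S) ^ m := pow_pos (div_pos hD hS) m
      rw [div_le_iff₀ hpow]
      calc Q ≤ 1 := key
        _ = (S/D)^m * (D/S)^m := by
            rw [← mul_pow, div_mul_div_comm, mul_comm S D, div_self (ne_of_gt (mul_pos hD hS)), one_pow]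
    calc Real.sqrt (∑ k : Fin d, (Matrix.det (Matrix.of fun i j : Fin d =>
          if j = k then u i else v j i)) ^ 2)
        = Real.sqrt (∑ k, Jf k ^ 2) := rfl
      _ ≤ Real.sqrt ((S/D) ^ m) := Real.sqrt_le_sqrt hsum
      _ = (S/D) ^ (D/2) := by
          rw [Real.sqrt_eq_rpow, ← Real.rpow_natCast (S/D) m,
            ← Real.rpow_mul (div_nonneg hS0 hD.le), hmD]
          ring_nf

end
end

section
/- Let m, d ≥ 1, let ψ be a norm on ℝ^m with dual norm ψ*, and let V be a real m×d matrix. Define the comass of an m×d matrix W by |W|_{c,ψ} = sup{ ψ*(W t) : t ∈ ℝ^d, ‖t‖ ≤ 1 }, where W t ∈ ℝ^m and ‖·‖ is the Euclidean norm on ℝ^d. Then sup{ Σ_{i,j} W_{ij} V_{ij} : W an m×d matrix with |W|_{c,ψ} ≤ 1 } = inf{ Σ_{l=1}^L ψ(z_l)·‖τ_l‖ : L ∈ ℕ, z_1,…,z_L ∈ ℝ^m, τ_1,…,τ_L ∈ ℝ^d, V = Σ_{l=1}^L z_l τ_l^T }, i.e. the mass norm of V (the dual of the comass norm) coincides with the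 infimum over finite rank-one decompositions V = Σ_l z_l ⊗ τ_l of Σ_l ψ(z_l)‖τ_l‖. -/
open MeasureTheory Finset Set
open scoped InnerProductSpace

noncomputable section

namespace Stmt13Aux

variable {m d : ℕ}

def Dset (ψ : (Fin m → ℝ) → ℝ) (V : Matrix (Fin m) (Fin d) ℝ) : Set ℝ :=
  { r : ℝ | ∃ (L : ℕ) (z : Fin L → Fin m → ℝ) (τ : Fin L → Fin d → ℝ),
      (∀ i j, V i j = ∑ l, z l i * τ l j) ∧
      r = ∑ l, ψ (z l) * Real.sqrt (∑ j, τ l j ^ 2) }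

variable {ψ : (Fin m → ℝ) → ℝ}

lemma Dset_nonempty (V : Matrix (Fin m) (Fin d) ℝ) : (Dset ψ V).Nonempty := by
  refine ⟨_, m, fun l i => if i = l then 1 else 0, fun l => V l, fun i j => ?_, rfl⟩
  simp [ite_mul]

lemma Dset_nonneg (hpos : ∀ h, 0 ≤ ψ h) {V : Matrix (Fin m) (Fin d) ℝ} {r : ℝ}
    (hr : r ∈ Dset ψ V) : 0 ≤ r := by
  obtain ⟨L, z, τ, -, rfl⟩ := hr
  exact Finset.sum_nonneg fun l _ => mul_nonneg (hpos _) (Real.sqrt_nonneg _)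

def massM (ψ : (Fin m → ℝ) → ℝ) (V : Matrix (Fin m) (Fin d) ℝ) : ℝ := sInf (Dset ψ V)

lemma Dset_bddBelow (hpos : ∀ h, 0 ≤ ψ h) (V : Matrix (Fin m) (Fin d) ℝ) :
    BddBelow (Dset ψ V) := ⟨0, fun _ hr => Dset_nonneg hpos hr⟩

lemma massM_le (hpos : ∀ h, 0 ≤ ψ h) {V : Matrix (Fin m) (Fin d) ℝ} {r : ℝ}
    (hr : r ∈ Dset ψ V) : massM ψ V ≤ r := csInf_le (Dset_bddBelow hpos V) hr

lemma massM_nonneg (hpos : ∀ h, 0 ≤ ψ h) (V : Matrix (Fin m) (Fin d) ℝ) :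
    0 ≤ massM ψ V := le_csInf (Dset_nonempty V) fun _ hr => Dset_nonneg hpos hr

lemma smul_mem_Dset (hhom : ∀ (a : ℝ) (h), ψ (a • h) = |a| * ψ h)
    {V : Matrix (Fin m) (Fin d) ℝ} {r : ℝ} (hr : r ∈ Dset ψ V) {c : ℝ} (hc : 0 < c) :
    c * r ∈ Dset ψ (c • V) := by
  obtain ⟨L, z, τ, hdec, rfl⟩ := hr
  refine ⟨L, fun l => c • z l, τ, fun i j => ?_, ?_⟩
  · simp only [Matrix.smul_apply, smul_eq_mul, hdec i j, Finset.mul_sum]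
    exact Finset.sum_congr rfl fun l _ => by simp [Pi.smul_apply]; ring
  · rw [Finset.mul_sum]
    refine Finset.sum_congr rfl fun l _ => ?_
    rw [hhom, abs_of_pos hc]; ring

lemma add_mem_Dset {X Y : Matrix (Fin m) (Fin d) ℝ} {a b : ℝ}
    (ha : a ∈ Dset ψ X) (hb : b ∈ Dset ψ Y) : a + b ∈ Dset ψ (X + Y) := by
  obtain ⟨L₁, z₁, τ₁, hd₁, rfl⟩ := ha
  obtain ⟨L₂, z₂, τ₂, hd₂, rfl⟩ := hb
  refine ⟨L₁ + L₂, Fin.append z₁ z₂, Fin.append τ₁ τ₂, fun i j => ?_, ?_⟩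
  · rw [Fin.sum_univ_add, Matrix.add_apply, hd₁ i j, hd₂ i j]
    congr 1 <;> exact Finset.sum_congr rfl fun l _ => by
      simp [Fin.append_left, Fin.append_right]
  · rw [Fin.sum_univ_add]
    congr 1 <;> exact Finset.sum_congr rfl fun l _ => by
      simp [Fin.append_left, Fin.append_right]

lemma rankone_mem (h : Fin m → ℝ) (t : Fin d → ℝ) :
    ψ h * Real.sqrt (∑ j, t j ^ 2) ∈ Dset ψ (Matrix.of fun i j => h i * t j) :=
  ⟨1, fun _ => h, fun _ => t, fun i j => by simp, by simp⟩

lemma massM_add (hpos : ∀ h, 0 ≤ ψ h) (X Y : Matrix (Fin m) (Fin d) ℝ) :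
    massM ψ (X + Y) ≤ massM ψ X + massM ψ Y := by
  have h1 : ∀ b ∈ Dset ψ Y, massM ψ (X + Y) ≤ massM ψ X + b := by
    intro b hb
    rw [← sub_le_iff_le_add]
    refine le_csInf (Dset_nonempty X) fun a ha => ?_
    rw [sub_le_iff_le_add, add_comm a b, ← add_comm a b]
    exact massM_le hpos (add_mem_Dset ha hb)
  have h2 : massM ψ (X + Y) - massM ψ X ≤ massM ψ Y := by
    refine le_csInf (Dset_nonempty Y) fun b hb => ?_
    linarith [h1 b hb]
  linarith

lemma massM_smul_le (hpos : ∀ h, 0 ≤ ψ h) (hhom : ∀ (a : ℝ) (h), ψ (a • h) = |a| * ψ h)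
    (V : Matrix (Fin m) (Fin d) ℝ) {c : ℝ} (hc : 0 < c) :
    massM ψ (c • V) ≤ c * massM ψ V := by
  have h2 : massM ψ (c • V) / c ≤ massM ψ V := by
    refine le_csInf (Dset_nonempty V) fun a ha => ?_
    rw [div_le_iff₀ hc, mul_comm]
    exact massM_le hpos (smul_mem_Dset hhom ha hc)
  calc massM ψ (c • V) = c * (massM ψ (c • V) / c) := by field_simp
    _ ≤ c * massM ψ V := by nlinarith [h2]

lemma massM_smul (hpos : ∀ h, 0 ≤ ψ h) (hhom : ∀ (a : ℝ) (h), ψ (a • h) = |a| * ψ h)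
    {c : ℝ} (hc : 0 < c) (V : Matrix (Fin m) (Fin d) ℝ) :
    massM ψ (c • V) = c * massM ψ V := by
  refine le_antisymm (massM_smul_le hpos hhom V hc) ?_
  have h := massM_smul_le hpos hhom (c • V) (inv_pos.mpr hc)
  rw [smul_smul, inv_mul_cancel₀ hc.ne', one_smul] at h
  calc c * massM ψ V ≤ c * (c⁻¹ * massM ψ (c • V)) := by nlinarith
    _ = massM ψ (c • V) := by field_simp

lemma smul_massM_le (hpos : ∀ h, 0 ≤ ψ h) (hhom : ∀ (a : ℝ) (h), ψ (a • h) = |a| * ψ h)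
    (V : Matrix (Fin m) (Fin d) ℝ) (a : ℝ) :
    a * massM ψ V ≤ massM ψ (a • V) := by
  rcases lt_trichotomy a 0 with h | rfl | h
  · exact (mul_nonpos_of_nonpos_of_nonneg h.le (massM_nonneg hpos V)).trans
      (massM_nonneg hpos _)
  · simpa using massM_nonneg hpos ((0:ℝ) • V)
  · exact (massM_smul hpos hhom h V).ge

lemma massM_zero (hpos : ∀ h, 0 ≤ ψ h) : massM ψ (0 : Matrix (Fin m) (Fin d) ℝ) = 0 :=
  le_antisymm (massM_le hpos ⟨0, Fin.elim0, Fin.elim0, fun i j => by simp, by simp⟩)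
    (massM_nonneg hpos 0)

lemma pairing_le (hpos : ∀ h, 0 ≤ ψ h) (hdef : ∀ h, ψ h = 0 ↔ h = 0)
    (hhom : ∀ (a : ℝ) (h), ψ (a • h) = |a| * ψ h)
    (W : Matrix (Fin m) (Fin d) ℝ)
    (hW : ∀ t : Fin d → ℝ, Real.sqrt (∑ j, t j ^ 2) ≤ 1 →
      ∀ h : Fin m → ℝ, ψ h ≤ 1 → ∑ i, W.mulVec t i * h i ≤ 1)
    (z : Fin m → ℝ) (t : Fin d → ℝ) :
    ∑ i, W.mulVec t i * z i ≤ ψ z * Real.sqrt (∑ j, t j ^ 2) := by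
  set s := Real.sqrt (∑ j, t j ^ 2) with hs
  by_cases hz : ψ z = 0
  · have hz0 : z = 0 := (hdef z).mp hz
    simp only [hz0, Pi.zero_apply, mul_zero, Finset.sum_const_zero]
    exact mul_nonneg (hpos 0) (Real.sqrt_nonneg _)
  by_cases ht : s = 0
  · have h0 : ∑ j, t j ^ 2 = 0 := le_antisymm (Real.sqrt_eq_zero'.mp ht)
      (Finset.sum_nonneg fun j _ => sq_nonneg _)
    have ht0 : t = 0 := funext fun j => pow_eq_zero_iff two_ne_zero |>.mp
      ((Finset.sum_eq_zero_iff_of_nonneg (fun j _ => sq_nonneg (t j))).mp h0 j (Finset.mem_univ j))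
    subst ht0
    have hrhs : ψ z * s = 0 := by rw [ht, mul_zero]
    rw [hrhs]
    simp [Matrix.mulVec_zero]
  have hsp : 0 < s := lt_of_le_of_ne (Real.sqrt_nonneg _) (Ne.symm ht)
  have hzp : 0 < ψ z := lt_of_le_of_ne (hpos z) (Ne.symm hz)
  have key := hW (s⁻¹ • t) ?_ ((ψ z)⁻¹ • z) ?_
  · have hmv : W.mulVec (s⁻¹ • t) = s⁻¹ • W.mulVec t := by
      ext i
      simp [Matrix.mulVec, dotProduct, Finset.mul_sum]
      exact Finset.sum_congr rfl fun j _ => by ring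
    rw [hmv] at key
    have heq : ∑ i, (s⁻¹ • W.mulVec t) i * ((ψ z)⁻¹ • z) i
        = s⁻¹ * (ψ z)⁻¹ * ∑ i, W.mulVec t i * z i := by
      rw [Finset.mul_sum]
      exact Finset.sum_congr rfl fun i _ => by simp [Pi.smul_apply]; ring
    rw [heq] at key
    calc ∑ i, W.mulVec t i * z i
        = (s * ψ z) * (s⁻¹ * (ψ z)⁻¹ * ∑ i, W.mulVec t i * z i) := by
          field_simp
      _ ≤ (s * ψ z) * 1 := mul_le_mul_of_nonneg_left key (by positivity)
      _ = ψ z * s := by ring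
  · have hes : Real.sqrt (∑ j, (s⁻¹ • t) j ^ 2) = |s⁻¹| * s := by
      rw [← Real.sqrt_sq_eq_abs, ← Real.sqrt_mul (sq_nonneg _)]
      congr 1
      rw [Finset.mul_sum]
      exact Finset.sum_congr rfl fun j _ => by simp [mul_pow]
    rw [hes, abs_of_pos (inv_pos.mpr hsp), inv_mul_cancel₀ hsp.ne']
  · rw [hhom, abs_of_pos (inv_pos.mpr hzp), inv_mul_cancel₀ hzp.ne']

lemma repr_lin (g : Matrix (Fin m) (Fin d) ℝ →ₗ[ℝ] ℝ) (X : Matrix (Fin m) (Fin d) ℝ) :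
    g X = ∑ i, ∑ j, X i j * g (Matrix.single i j 1) := by
  conv_lhs => rw [Matrix.matrix_eq_sum_single X]
  rw [map_sum]
  refine Finset.sum_congr rfl fun i _ => ?_
  rw [map_sum]
  refine Finset.sum_congr rfl fun j _ => ?_
  rw [show Matrix.single i j (X i j) = X i j • Matrix.single i j 1 by
        rw [Matrix.smul_single, smul_eq_mul, mul_one], _root_.map_smul, smul_eq_mul]

end Stmt13Aux

open Stmt13Aux

/-- duality between the comass norm and the mass (projective tensor) norm on
`m × d` matrices: the supremum of `⟨W, V⟩` over matrices `W` of comass at most one equals the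
infimum of `Σ_l ψ(z_l)‖τ_l‖` over finite rank-one decompositions `V = Σ_l z_l τ_lᵀ`. -/
theorem stmt13 (m d : ℕ) (hm : 1 ≤ m) (hd : 1 ≤ d)
    (ψ : (Fin m → ℝ) → ℝ)
    (hpos : ∀ h, 0 ≤ ψ h) (hdef : ∀ h, ψ h = 0 ↔ h = 0)
    (hhom : ∀ (a : ℝ) (h), ψ (a • h) = |a| * ψ h)
    (htri : ∀ h h', ψ (h + h') ≤ ψ h + ψ h')
    (V : Matrix (Fin m) (Fin d) ℝ) :
    sSup { r : ℝ | ∃ W : Matrix (Fin m) (Fin d) ℝ,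
        (∀ t : Fin d → ℝ, Real.sqrt (∑ j, t j ^ 2) ≤ 1 →
          ∀ h : Fin m → ℝ, ψ h ≤ 1 → ∑ i, W.mulVec t i * h i ≤ 1) ∧
        r = ∑ i, ∑ j, W i j * V i j }
      = sInf { r : ℝ | ∃ (L : ℕ) (z : Fin L → Fin m → ℝ) (τ : Fin L → Fin d → ℝ),
          (∀ i j, V i j = ∑ l, z l i * τ l j) ∧
          r = ∑ l, ψ (z l) * Real.sqrt (∑ j, τ l j ^ 2) } := by
  classical
  show sSup _ = massM ψ V
  -- upper bound: every pairing value is at most the mass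
  have hub : ∀ r ∈ { r : ℝ | ∃ W : Matrix (Fin m) (Fin d) ℝ,
      (∀ t : Fin d → ℝ, Real.sqrt (∑ j, t j ^ 2) ≤ 1 →
        ∀ h : Fin m → ℝ, ψ h ≤ 1 → ∑ i, W.mulVec t i * h i ≤ 1) ∧
      r = ∑ i, ∑ j, W i j * V i j }, r ≤ massM ψ V := by
    rintro r ⟨W, hW, rfl⟩
    refine le_csInf (Dset_nonempty V) ?_
    rintro s ⟨L, z, τ, hdec, rfl⟩
    have hsum : ∑ i, ∑ j, W i j * V i j = ∑ l, ∑ i, W.mulVec (τ l) i * z l i := by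
      calc ∑ i, ∑ j, W i j * V i j
          = ∑ i, ∑ l, ∑ j, W i j * (z l i * τ l j) := by
            refine Finset.sum_congr rfl fun i _ => ?_
            simp_rw [hdec, Finset.mul_sum]
            exact Finset.sum_comm
        _ = ∑ l, ∑ i, ∑ j, W i j * (z l i * τ l j) := Finset.sum_comm
        _ = ∑ l, ∑ i, W.mulVec (τ l) i * z l i := by
            refine Finset.sum_congr rfl fun l _ => Finset.sum_congr rfl fun i _ => ?_
            simp only [Matrix.mulVec, dotProduct, Finset.sum_mul]
            exact Finset.sum_congr rfl fun j _ => by ring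
    rw [hsum]
    exact Finset.sum_le_sum fun l _ => pairing_le hpos hdef hhom W hW (z l) (τ l)
  -- the mass itself is attained as a pairing value
  have hmem : massM ψ V ∈ { r : ℝ | ∃ W : Matrix (Fin m) (Fin d) ℝ,
      (∀ t : Fin d → ℝ, Real.sqrt (∑ j, t j ^ 2) ≤ 1 →
        ∀ h : Fin m → ℝ, ψ h ≤ 1 → ∑ i, W.mulVec t i * h i ≤ 1) ∧
      r = ∑ i, ∑ j, W i j * V i j } := by
    by_cases hV : V = 0
    · refine ⟨0, fun t ht h hh => ?_, ?_⟩
      · simp [Matrix.zero_mulVec]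
      · subst hV
        simp [massM_zero hpos]
    · obtain ⟨g, hg1, hg2⟩ := exists_extension_of_le_sublinear
        (LinearPMap.mkSpanSingleton V (massM ψ V) hV) (massM ψ)
        (fun c hc X => massM_smul hpos hhom hc X)
        (fun X Y => massM_add hpos X Y)
        (by
          rintro ⟨x, hx⟩
          obtain ⟨a, rfl⟩ := Submodule.mem_span_singleton.mp hx
          rw [LinearPMap.mkSpanSingleton'_apply]
          rw [smul_eq_mul]
          exact smul_massM_le hpos hhom V a)
      have hgV : g V = massM ψ V := by
        have := hg1 ⟨V, Submodule.mem_span_singleton_self V⟩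
        rwa [LinearPMap.mkSpanSingleton_apply] at this
      refine ⟨Matrix.of fun i j => g (Matrix.single i j 1), fun t ht h hh => ?_, ?_⟩
      · have heq : ∑ i, (Matrix.of fun i j => g (Matrix.single i j 1)).mulVec t i * h i
            = g (Matrix.of fun i j => h i * t j) := by
          rw [repr_lin g (Matrix.of fun i j => h i * t j)]
          refine Finset.sum_congr rfl fun i _ => ?_
          simp only [Matrix.mulVec, dotProduct, Matrix.of_apply, Finset.sum_mul]
          exact Finset.sum_congr rfl fun j _ => by ring
        rw [heq]
        calc g (Matrix.of fun i j => h i * t j)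
            ≤ massM ψ (Matrix.of fun i j => h i * t j) := hg2 _
          _ ≤ ψ h * Real.sqrt (∑ j, t j ^ 2) := massM_le hpos (rankone_mem h t)
          _ ≤ 1 * 1 := mul_le_mul hh ht (Real.sqrt_nonneg _) zero_le_one
          _ = 1 := one_mul 1
      · rw [← hgV, repr_lin g V]
        refine Finset.sum_congr rfl fun i _ => Finset.sum_congr rfl fun j _ => mul_comm _ _
  exact le_antisymm (Real.sSup_le hub (massM_nonneg hpos V)) (le_csSup ⟨_, hub⟩ hmem)


end
end

section
/- Let d ≥ 2, n ≥ 2, α ∈ [0,1], and let u_1, …, u_{n−1} : ℝ^d → S^{d−1} ⊂ ℝ^d be maps, all differentiable at a point x ∈ ℝ^d. Let J(x) be the (n−1)×d matrix whose i-th row is the pre-jacobian ju_i(x). Then |J(x)|_{m,ψ_α} ≤ e_α(u⃗)(x), where |·|_{m,ψ_α} is the mass norm defined by |V|_{m,ψ_α} = inf{ Σ_l ψ_α(z_l)·‖τ_l‖ : V = Σ_l z_l τ_l^T, z_l ∈ ℝ^{n−1}, τ_l ∈ ℝ^d }. -/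
open MeasureTheory Finset Set
open scoped InnerProductSpace

noncomputable section

open scoped Matrix in
lemma det_sq_le {d : ℕ} (hd : 1 ≤ d) (M : Matrix (Fin d) (Fin d) ℝ) :
    M.det ^ 2 ≤ ((∑ j, ∑ i, M j i ^ 2) / d) ^ d := by
  classical
  have hP : (M * Mᴴ).PosSemidef := Matrix.posSemidef_self_mul_conjTranspose M
  have hH : (M * Mᴴ).IsHermitian := hP.1
  have hev : ∀ i, 0 ≤ hH.eigenvalues i := hP.eigenvalues_nonneg
  have hdet : M.det ^ 2 = ∏ i, hH.eigenvalues i := by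
    have h1 : (M * Mᴴ).det = ∏ i, hH.eigenvalues i := by
      simpa using hH.det_eq_prod_eigenvalues
    rw [← h1, Matrix.det_mul, Matrix.det_conjTranspose]
    simp [sq]
  have hU1 : (star (hH.eigenvectorUnitary : Matrix (Fin d) (Fin d) ℝ)) *
      (hH.eigenvectorUnitary : Matrix (Fin d) (Fin d) ℝ) = 1 := by
    exact Matrix.mem_unitaryGroup_iff'.mp (hH.eigenvectorUnitary).2
  have htr : (M * Mᴴ).trace = ∑ i, hH.eigenvalues i := by
    conv_lhs => rw [hH.spectral_theorem]
    rw [Unitary.conjStarAlgAut_apply, Matrix.trace_mul_comm, ← mul_assoc, hU1, one_mul]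
    simp [Matrix.trace_diagonal]
  have htr2 : (M * Mᴴ).trace = ∑ j, ∑ i, M j i ^ 2 := by
    rw [Matrix.trace]
    congr 1
    ext j
    simp [Matrix.diag, Matrix.mul_apply, Matrix.conjTranspose_apply, sq]
  -- AM-GM
  have hd0 : (d : ℝ) ≠ 0 := by positivity
  have hamgm : ∏ i, hH.eigenvalues i ≤ ((∑ i, hH.eigenvalues i) / d) ^ d := by
    have h := Real.geom_mean_le_arith_mean_weighted Finset.univ (fun _ => 1 / d)
      hH.eigenvalues (fun i _ => by positivity)
      (by simp [Finset.card_univ]; field_simp) (fun i _ => hev i)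
    have hprod : ∏ i, hH.eigenvalues i = (∏ i, hH.eigenvalues i ^ (1 / (d:ℝ))) ^ d := by
      rw [← Finset.prod_pow]
      refine Finset.prod_congr rfl fun i _ => ?_
      rw [← Real.rpow_natCast (hH.eigenvalues i ^ (1 / (d:ℝ))), ← Real.rpow_mul (hev i)]
      rw [one_div_mul_cancel hd0, Real.rpow_one]
    rw [hprod]
    have h2 : (∑ i ∈ Finset.univ, (1 / (d:ℝ)) * hH.eigenvalues i) = (∑ i, hH.eigenvalues i) / d := by
      rw [← Finset.mul_sum]; ring
    calc (∏ i, hH.eigenvalues i ^ (1 / (d:ℝ))) ^ d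
        ≤ (∑ i ∈ Finset.univ, (1 / (d:ℝ)) * hH.eigenvalues i) ^ d := by
          apply pow_le_pow_left₀ (Finset.prod_nonneg fun i _ => Real.rpow_nonneg (hev i) _) h
      _ = _ := by rw [h2]
  calc M.det ^ 2 = ∏ i, hH.eigenvalues i := hdet
    _ ≤ ((∑ i, hH.eigenvalues i) / d) ^ d := hamgm
    _ = _ := by rw [← htr, htr2]

lemma det_identity {d : ℕ} (c : Fin d → Fin d → ℝ) (w : Fin d → ℝ) (v : Fin d → ℝ)
    (hortho : ∀ j, ∑ i, c j i * w i = 0) (hw : w ≠ 0) :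
    Matrix.det (Matrix.of fun j i => c j i + v j * w i) =
      ∑ k, v k * Matrix.det ((Matrix.of c).updateRow k w) := by
  classical
  set f := (Matrix.detRowAlternating : (Fin d → ℝ) [⋀^Fin d]→ₗ[ℝ] ℝ) with hf
  have hM : (Matrix.of fun j i => c j i + v j * w i) = ((fun j => v j • w) + fun j => c j) := by
    ext j i
    simp [add_comm, mul_comm]
  have hexp : Matrix.det (Matrix.of fun j i => c j i + v j * w i) =
      ∑ s : Finset (Fin d), f (s.piecewise (fun j => v j • w) c) := by
    rw [show Matrix.det (Matrix.of fun j i => c j i + v j * w i)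
        = f ((fun j => v j • w) + fun j => c j) by rw [← hM]; rfl]
    exact f.toMultilinearMap.map_add_univ _ _
  have hzero : f c = 0 := by
    have h1 : ∃ vv ≠ 0, (Matrix.of c).mulVec vv = 0 := by
      refine ⟨w, hw, ?_⟩
      ext j
      simpa [Matrix.mulVec, dotProduct] using hortho j
    have h2 := (Matrix.exists_mulVec_eq_zero_iff).mp h1
    exact h2
  have hterm : ∀ s : Finset (Fin d), f (s.piecewise (fun j => v j • w) c) =
      ∑ k : Fin d, if s = {k} then v k * f (Function.update c k w) else 0 := by
    intro s
    rcases Nat.lt_or_ge s.card 2 with hc | hc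
    · interval_cases h : s.card
      · have hs : s = ∅ := Finset.card_eq_zero.mp h
        subst hs
        rw [Finset.piecewise_empty]
        rw [hzero]
        symm
        refine Finset.sum_eq_zero fun k _ => ?_
        simp [(Finset.singleton_ne_empty k).symm]
      · obtain ⟨k₀, hk₀⟩ := Finset.card_eq_one.mp h
        subst hk₀
        rw [Finset.piecewise_singleton]
        rw [f.map_update_smul]
        have heq : ∀ k : Fin d, (({k₀} : Finset (Fin d)) = {k}) = (k = k₀) := by
          intro k; simp [Finset.singleton_inj, eq_comm]
        simp only [heq]
        rw [Finset.sum_ite_eq' Finset.univ k₀ (fun k => v k * f (Function.update c k w))]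
        simp [smul_eq_mul]
    · obtain ⟨j, hj, l, hl, hjl⟩ := Finset.one_lt_card.mp hc
      set m := s.piecewise (fun j => v j • w) c with hm
      have hmj : m j = v j • w := Finset.piecewise_eq_of_mem _ _ _ hj
      have hml : m l = v l • w := Finset.piecewise_eq_of_mem _ _ _ hl
      have h1 : f m = v j • f (Function.update m j w) := by
        conv_lhs => rw [← Function.update_eq_self j m, hmj]
        exact f.map_update_smul m j (v j) w
      have h2 : f (Function.update m j w) = v l • f (Function.update (Function.update m j w) l w) := by
        conv_lhs => rw [← Function.update_eq_self l (Function.update m j w),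
          Function.update_of_ne hjl.symm, hml]
        exact f.map_update_smul _ l (v l) w
      have h3 : f (Function.update (Function.update m j w) l w) = 0 := by
        apply f.map_eq_zero_of_eq _ _ hjl
        rw [Function.update_of_ne hjl, Function.update_self, Function.update_self]
      rw [h1, h2, h3]
      symm
      refine (Finset.sum_eq_zero fun k _ => ?_).trans (by simp)
      have : s ≠ {k} := by
        intro hs
        rw [hs, Finset.card_singleton] at hc
        omega
      simp [this]
  rw [hexp, Finset.sum_congr rfl fun s _ => hterm s, Finset.sum_comm]
  refine Finset.sum_congr rfl fun k _ => ?_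
  rw [Finset.sum_ite_eq' Finset.univ ({k} : Finset (Fin d))
    (fun _ => v k * f (Function.update c k w))]
  simp only [Finset.mem_univ, if_true]
  congr 1

lemma pjac_eq_det_updateRow {d : ℕ} (u : Euc d → Euc d) (x : Euc d) (k : Fin d) :
    pjac u x k = Matrix.det ((Matrix.of fun j i : Fin d =>
      (fderiv ℝ u x (EuclideanSpace.single j 1) : Euc d) i).updateRow k (fun i => u x i)) := by
  rw [pjac, ← Matrix.det_transpose]
  congr 1
  ext i j
  simp [Matrix.transpose_apply, Matrix.updateRow_apply]

lemma ortho_fderiv {d : ℕ} (u : Euc d → Euc d) (x : Euc d) (hs : ∀ y, ‖u y‖ = 1)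
    (hdiff : DifferentiableAt ℝ u x) (h : Euc d) :
    ⟪u x, fderiv ℝ u x h⟫_ℝ = 0 := by
  have hconst : (fun y => ⟪u y, u y⟫_ℝ) = fun _ => (1 : ℝ) := by
    funext y
    rw [real_inner_self_eq_norm_sq, hs y]
    norm_num
  have h0 : fderiv ℝ (fun y => ⟪u y, u y⟫_ℝ) x = 0 := by
    rw [hconst]
    exact fderiv_const_apply 1
  have h1 := fderiv_inner_apply (𝕜 := ℝ) hdiff hdiff h
  rw [h0] at h1
  simp only [ContinuousLinearMap.zero_apply] at h1
  linarith [h1, real_inner_comm (u x) (fderiv ℝ u x h)]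

lemma pjac_norm_le {d : ℕ} (hd : 2 ≤ d) (u : Euc d → Euc d) (x : Euc d)
    (hs : ∀ y, ‖u y‖ = 1) (hdiff : DifferentiableAt ℝ u x) :
    Real.sqrt (∑ k, pjac u x k ^ 2) ≤
      ((d : ℝ) - 1) ^ (-(((d : ℝ) - 1) / 2)) * frobD u x ^ (d - 1) := by
  classical
  set c : Fin d → Fin d → ℝ := fun j i => fderiv ℝ u x (EuclideanSpace.single j 1) i with hc
  set w : Fin d → ℝ := fun i => u x i with hwdef
  set e : ℝ := (d : ℝ) - 1 with he
  have he1 : (1 : ℝ) ≤ e := by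
    rw [he]
    have : (2 : ℝ) ≤ (d : ℝ) := by exact_mod_cast hd
    linarith
  have he0 : (0 : ℝ) < e := by linarith
  have hw2 : ∑ i, w i ^ 2 = 1 := by
    have := hs x
    rw [EuclideanSpace.norm_eq] at this
    have h2 : Real.sqrt (∑ i, ‖u x i‖ ^ 2) ^ 2 = 1 := by rw [this]; norm_num
    rw [Real.sq_sqrt (by positivity)] at h2
    simpa [Real.norm_eq_abs, sq_abs] using h2
  have hworth : ∀ j, ∑ i, c j i * w i = 0 := by
    intro j
    have := ortho_fderiv u x hs hdiff (EuclideanSpace.single j 1)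
    rw [PiLp.inner_apply] at this
    simpa [hc, hwdef, mul_comm, RCLike.inner_apply, conj_trivial] using this
  have hwne : w ≠ 0 := by
    intro h0
    rw [h0] at hw2
    simp at hw2
  set A : ℝ := ∑ j : Fin d, ‖fderiv ℝ u x (EuclideanSpace.single j 1)‖ ^ 2 with hA
  have hA0 : 0 ≤ A := by positivity
  have hAc : A = ∑ j, ∑ i, c j i ^ 2 := by
    rw [hA]
    refine Finset.sum_congr rfl fun j _ => ?_
    rw [EuclideanSpace.norm_eq, Real.sq_sqrt (by positivity)]
    simp [hc, Real.norm_eq_abs, sq_abs]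
  have hfrob : frobD u x = Real.sqrt A := rfl
  have hRHS0 : 0 ≤ ((d : ℝ) - 1) ^ (-(((d : ℝ) - 1) / 2)) * frobD u x ^ (d - 1) := by
    apply mul_nonneg (Real.rpow_nonneg (by linarith) _)
    exact pow_nonneg (Real.sqrt_nonneg _) _
  set P2 : ℝ := ∑ k, pjac u x k ^ 2 with hP2
  have hP20 : 0 ≤ P2 := by positivity
  rcases eq_or_lt_of_le hP20 with hP2z | hP2pos
  · rw [← hP2z, Real.sqrt_zero]
    exact hRHS0
  -- A > 0
  have hApos : 0 < A := by
    rcases eq_or_lt_of_le hA0 with hAz | hApos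
    · exfalso
      have hczero : ∀ j i, c j i = 0 := by
        intro j i
        have hj : ‖fderiv ℝ u x (EuclideanSpace.single j 1)‖ ^ 2 = 0 := by
          have := Finset.sum_eq_zero_iff_of_nonneg (fun j _ => by positivity) |>.mp hAz.symm
          exact this j (Finset.mem_univ j)
        have : ‖fderiv ℝ u x (EuclideanSpace.single j 1)‖ = 0 := by
          nlinarith [norm_nonneg (fderiv ℝ u x (EuclideanSpace.single j 1))]
        have hz : fderiv ℝ u x (EuclideanSpace.single j 1) = 0 := norm_eq_zero.mp this
        simp [hc, hz]
      have hpz : ∀ k, pjac u x k = 0 := by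
        intro k
        have : Nontrivial (Fin d) := Fin.nontrivial_iff_two_le.mpr hd
        obtain ⟨j, hj⟩ := exists_ne k
        apply Matrix.det_eq_zero_of_column_eq_zero j
        intro i
        simp only [Matrix.of_apply, if_neg hj]
        exact hczero j i
      rw [hP2] at hP2pos
      have : P2 = 0 := by
        rw [hP2]
        exact Finset.sum_eq_zero fun k _ => by rw [hpz k]; ring
      linarith
    · exact hApos
  set q : ℝ := A / e with hq
  have hqpos : 0 < q := div_pos hApos he0
  set t : ℝ := Real.sqrt q with ht
  have htpos : 0 < t := Real.sqrt_pos.mpr hqpos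
  have ht2 : t ^ 2 = q := Real.sq_sqrt hqpos.le
  set P : ℝ := Real.sqrt P2 with hP
  have hPpos : 0 < P := Real.sqrt_pos.mpr hP2pos
  have hPP : P ^ 2 = P2 := Real.sq_sqrt hP20
  set v : Fin d → ℝ := fun k => (t / P) * pjac u x k with hv
  -- identity
  have hid : Matrix.det (Matrix.of fun j i => c j i + v j * w i) = t * P := by
    rw [det_identity c w v hworth hwne]
    have : ∀ k, v k * Matrix.det ((Matrix.of c).updateRow k w) = (t / P) * pjac u x k ^ 2 := by
      intro k
      have hdetk : Matrix.det ((Matrix.of c).updateRow k w) = pjac u x k :=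
        (pjac_eq_det_updateRow u x k).symm
      rw [hdetk, hv]
      ring
    rw [Finset.sum_congr rfl fun k _ => this k, ← Finset.mul_sum, ← hP2]
    rw [← hPP]
    field_simp
  -- Frobenius bound
  have hfrobM : ∑ j, ∑ i, ((Matrix.of fun j i => c j i + v j * w i) j i) ^ 2 = A + t ^ 2 := by
    have hrow : ∀ j, ∑ i, (c j i + v j * w i) ^ 2 = (∑ i, c j i ^ 2) + v j ^ 2 := by
      intro j
      have hexp : ∀ i, (c j i + v j * w i) ^ 2 =
          c j i ^ 2 + (2 * v j) * (c j i * w i) + v j ^ 2 * w i ^ 2 := fun i => by ring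
      rw [Finset.sum_congr rfl fun i _ => hexp i]
      rw [Finset.sum_add_distrib, Finset.sum_add_distrib, ← Finset.mul_sum, ← Finset.mul_sum,
        hworth j, hw2]
      ring
    simp only [Matrix.of_apply]
    rw [Finset.sum_congr rfl fun j _ => hrow j, Finset.sum_add_distrib, ← hAc]
    congr 1
    -- ∑ j, v j ^ 2 = t ^ 2
    have : ∀ j, v j ^ 2 = (t / P) ^ 2 * pjac u x j ^ 2 := fun j => by rw [hv]; ring
    rw [Finset.sum_congr rfl fun j _ => this j, ← Finset.mul_sum, ← hP2, ← hPP]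
    field_simp
  have hdetbd := det_sq_le (by omega) (Matrix.of fun j i => c j i + v j * w i)
  rw [hid, hfrobM] at hdetbd
  -- (A + t^2)/d = q
  have hsum : (A + t ^ 2) / (d : ℝ) = q := by
    rw [ht2, hq]
    have hd0 : (d : ℝ) ≠ 0 := by positivity
    have he0' : e ≠ 0 := ne_of_gt he0
    field_simp
    rw [he]
    ring
  rw [hsum] at hdetbd
  -- (t*P)^2 = q * P2 ≤ q ^ d → P2 ≤ q ^ (d-1)
  have hP2le : P2 ≤ q ^ (d - 1) := by
    have h1 : P2 * q ≤ q ^ (d - 1) * q := by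
      calc P2 * q = (t * P) ^ 2 := by rw [mul_pow, ht2, hPP]; ring
        _ ≤ q ^ d := hdetbd
        _ = q ^ (d - 1) * q := by rw [← pow_succ]; congr 1; omega
    exact le_of_mul_le_mul_right h1 hqpos
  -- conclude
  have hsqrt : Real.sqrt P2 ≤ Real.sqrt (q ^ (d - 1)) := Real.sqrt_le_sqrt hP2le
  have hqpow : Real.sqrt (q ^ (d - 1)) = Real.sqrt q ^ (d - 1) := by
    rw [show q ^ (d-1) = (Real.sqrt q ^ (d-1)) ^ 2 by
      rw [← pow_mul, mul_comm (d-1) 2, pow_mul, Real.sq_sqrt hqpos.le]]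
    exact Real.sqrt_sq (by positivity)
  have hsplit : Real.sqrt q = Real.sqrt A / Real.sqrt e := by
    rw [hq]
    exact Real.sqrt_div hA0 e
  have hconst : ((d : ℝ) - 1) ^ (-(((d : ℝ) - 1) / 2)) = 1 / Real.sqrt e ^ (d - 1) := by
    have h1 : Real.sqrt e ^ (d - 1) = e ^ (((d : ℝ) - 1) / 2) := by
      rw [Real.sqrt_eq_rpow, ← Real.rpow_natCast (e ^ ((1:ℝ)/2)) (d-1), ← Real.rpow_mul he0.le]
      congr 1
      have : ((d - 1 : ℕ) : ℝ) = (d : ℝ) - 1 := by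
        have : (1 : ℕ) ≤ d := by omega
        push_cast [Nat.cast_sub this]
        ring
      rw [this]
      ring
    rw [h1, ← he, Real.rpow_neg he0.le, one_div]
  calc Real.sqrt P2 ≤ Real.sqrt (q ^ (d - 1)) := hsqrt
    _ = Real.sqrt q ^ (d - 1) := hqpow
    _ = (Real.sqrt A / Real.sqrt e) ^ (d - 1) := by rw [hsplit]
    _ = ((d : ℝ) - 1) ^ (-(((d : ℝ) - 1) / 2)) * frobD u x ^ (d - 1) := by
      rw [hconst, hfrob, div_pow]
      field_simp

lemma psiNorm_nonneg' {m : ℕ} (hm : 0 < m) (α : ℝ) (h : Fin m → ℝ) : 0 ≤ psiNorm α h := by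
  unfold psiNorm
  split
  · have hb : BddAbove (Set.range fun i => |h i|) := Finite.bddAbove_range _
    exact le_trans (abs_nonneg (h ⟨0, hm⟩)) (le_ciSup hb ⟨0, hm⟩)
  · positivity

lemma psiNorm_indicator {m : ℕ} (hm : 0 < m) (α : ℝ) (I : Finset (Fin m)) (hI : I.Nonempty) :
    psiNorm α (fun i => if i ∈ I then (1:ℝ) else 0) = (I.card : ℝ) ^ α := by
  have : Nonempty (Fin m) := ⟨⟨0, hm⟩⟩
  unfold psiNorm
  split
  case isTrue hα =>
    rw [hα, Real.rpow_zero]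
    apply le_antisymm
    · apply ciSup_le
      intro i
      dsimp only
      split <;> simp
    · obtain ⟨i, hi⟩ := hI
      have hb : BddAbove (Set.range fun i => |if i ∈ I then (1:ℝ) else 0|) :=
        Finite.bddAbove_range _
      calc (1:ℝ) = |if i ∈ I then (1:ℝ) else 0| := by rw [if_pos hi]; simp
        _ ≤ _ := le_ciSup hb i
  case isFalse hα =>
    have h1 : ∀ i : Fin m, |if i ∈ I then (1:ℝ) else 0| ^ ((1:ℝ)/α) = if i ∈ I then (1:ℝ) else 0 := by
      intro i
      split
      · simp
      · simp [Real.zero_rpow (inv_ne_zero hα)]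
    simp only [one_div] at h1 ⊢
    rw [Finset.sum_congr rfl fun i _ => h1 i]
    congr 1
    rw [Finset.sum_ite_mem]
    simp

/-- the mass norm of the matrix of pre-jacobians of a tuple of sphere-valued
maps at a point is bounded above by the energy density `e_α` at this point. -/
theorem stmt14 (d n : ℕ) (hd : 2 ≤ d) (hn : 2 ≤ n) (α : ℝ) (hα0 : 0 ≤ α) (hα1 : α ≤ 1)
    (u : Fin (n - 1) → Euc d → Euc d) (x : Euc d)
    (hsphere : ∀ i y, ‖u i y‖ = 1)
    (hdiff : ∀ i, DifferentiableAt ℝ (u i) x) :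
    sInf { r : ℝ | ∃ (L : ℕ) (z : Fin L → Fin (n - 1) → ℝ) (τ : Fin L → Fin d → ℝ),
        (∀ i k, pjac (u i) x k = ∑ l, z l i * τ l k) ∧
        r = ∑ l, psiNorm α (z l) * Real.sqrt (∑ k, τ l k ^ 2) }
      ≤ eDens α u x := by
  classical
  have hm : 0 < n - 1 := by omega
  set C : ℝ := ((d : ℝ) - 1) ^ (-(((d : ℝ) - 1) / 2)) with hC
  have hd2 : (2:ℝ) ≤ (d:ℝ) := by exact_mod_cast hd
  have hCpos : 0 < C := Real.rpow_pos_of_pos (by linarith) _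
  set S := { r : ℝ | ∃ (L : ℕ) (z : Fin L → Fin (n - 1) → ℝ) (τ : Fin L → Fin d → ℝ),
        (∀ i k, pjac (u i) x k = ∑ l, z l i * τ l k) ∧
        r = ∑ l, psiNorm α (z l) * Real.sqrt (∑ k, τ l k ^ 2) } with hS
  have hSbdd : BddBelow S := by
    refine ⟨0, fun r hr => ?_⟩
    obtain ⟨L, z, τ, -, hr⟩ := hr
    rw [hr]
    exact Finset.sum_nonneg fun l _ =>
      mul_nonneg (psiNorm_nonneg' hm α (z l)) (Real.sqrt_nonneg _)
  set T := { r : ℝ | ∃ P : Finpartition (Finset.univ : Finset (Fin (n-1))),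
      (∀ I ∈ P.parts, ∀ i ∈ I, ∀ l ∈ I, pjac (u i) x = pjac (u l) x) ∧
      r = ∑ I ∈ P.parts, (I.card : ℝ) ^ α *
        sInf { y : ℝ | ∃ i ∈ I, y = frobD (u i) x ^ (d - 1) } } with hT
  have hkey : ∀ t ∈ T, sInf S ≤ C * t := by
    rintro t ⟨P, hPeq, rfl⟩
    have hchoice : ∀ I : {I // I ∈ P.parts}, ∃ i ∈ (I : Finset (Fin (n-1))),
        sInf { y : ℝ | ∃ i ∈ (I : Finset (Fin (n-1))), y = frobD (u i) x ^ (d - 1) }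
          = frobD (u i) x ^ (d - 1) := by
      intro I
      have hne : (I : Finset (Fin (n-1))).Nonempty := P.nonempty_of_mem_parts I.2
      have himg : { y : ℝ | ∃ i ∈ (I : Finset (Fin (n-1))), y = frobD (u i) x ^ (d - 1) }
          = (fun i => frobD (u i) x ^ (d - 1)) '' ((I : Finset (Fin (n-1))) : Set (Fin (n-1))) := by
        ext y
        simp [eq_comm]
      have hfin : { y : ℝ | ∃ i ∈ (I : Finset (Fin (n-1))), y = frobD (u i) x ^ (d - 1) }.Finite := by
        rw [himg]; exact (Set.toFinite _).image _
      obtain ⟨iw, hiw⟩ := hne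
      have hne' : { y : ℝ | ∃ i ∈ (I : Finset (Fin (n-1))), y = frobD (u i) x ^ (d - 1) }.Nonempty :=
        ⟨frobD (u iw) x ^ (d - 1), iw, hiw, rfl⟩
      obtain ⟨i, hi, hy⟩ := hne'.csInf_mem hfin
      exact ⟨i, hi, hy⟩
    choose i0 hi0mem hi0val using hchoice
    set L := P.parts.card with hL
    set E : Fin L ≃ {I // I ∈ P.parts} :=
      ((Fintype.equivFin {I // I ∈ P.parts}).trans (finCongr (Fintype.card_coe P.parts))).symm
      with hE
    set z : Fin L → Fin (n-1) → ℝ :=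
      fun l i => if i ∈ (E l : Finset (Fin (n-1))) then 1 else 0 with hz
    set τ : Fin L → Fin d → ℝ := fun l k => pjac (u (i0 (E l))) x k with hτ
    have hvalid : ∀ i k, pjac (u i) x k = ∑ l, z l i * τ l k := by
      intro i k
      obtain ⟨I₀, ⟨hI₀p, hiI₀⟩, huniq⟩ := P.existsUnique_mem (Finset.mem_univ i)
      set l₀ : Fin L := E.symm ⟨I₀, hI₀p⟩ with hl₀
      have hside : ∀ l ∈ Finset.univ, l ≠ l₀ → z l i * τ l k = 0 := by
        intro l _ hl
        have hz0 : z l i = 0 := by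
          rw [hz]
          simp only
          rw [if_neg]
          intro hmem
          have hIl : (E l : Finset (Fin (n-1))) ∈ P.parts := (E l).2
          have : (E l : Finset (Fin (n-1))) = I₀ := huniq _ ⟨hIl, hmem⟩
          apply hl
          have hEl : E l = ⟨I₀, hI₀p⟩ := Subtype.ext this
          rw [hl₀, ← hEl, Equiv.symm_apply_apply]
        rw [hz0, zero_mul]
      rw [Finset.sum_eq_single l₀ hside (by simp)]
      have hEl₀ : (E l₀ : Finset (Fin (n-1))) = I₀ := by rw [hl₀, Equiv.apply_symm_apply]
      have hz1 : z l₀ i = 1 := by rw [hz]; simp only [hEl₀, if_pos hiI₀]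
      have h2 : pjac (u (i0 (E l₀))) x = pjac (u i) x := by
        apply hPeq I₀ hI₀p
        · rw [← hEl₀]; exact hi0mem (E l₀)
        · exact hiI₀
      rw [hz1, hτ, one_mul]
      exact congrFun h2.symm k
    have hmemS : (∑ l, psiNorm α (z l) * Real.sqrt (∑ k, τ l k ^ 2)) ∈ S :=
      ⟨L, z, τ, hvalid, rfl⟩
    have hle : ∑ l, psiNorm α (z l) * Real.sqrt (∑ k, τ l k ^ 2)
        ≤ C * ∑ I ∈ P.parts, (I.card : ℝ) ^ α *
          sInf { y : ℝ | ∃ i ∈ I, y = frobD (u i) x ^ (d - 1) } := by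
      rw [Finset.mul_sum]
      have hsum : ∑ I ∈ P.parts, C * ((I.card : ℝ) ^ α *
            sInf { y : ℝ | ∃ i ∈ I, y = frobD (u i) x ^ (d - 1) })
          = ∑ l : Fin L, C * (((E l : Finset (Fin (n-1))).card : ℝ) ^ α *
            sInf { y : ℝ | ∃ i ∈ (E l : Finset (Fin (n-1))), y = frobD (u i) x ^ (d - 1) }) := by
        rw [← Finset.sum_coe_sort]
        exact (Equiv.sum_comp E fun I => C * (((I : Finset (Fin (n-1))).card : ℝ) ^ α *
          sInf { y : ℝ | ∃ i ∈ (I : Finset (Fin (n-1))), y = frobD (u i) x ^ (d - 1) })).symm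
      rw [hsum]
      apply Finset.sum_le_sum
      intro l _
      have hIne : (E l : Finset (Fin (n-1))).Nonempty := P.nonempty_of_mem_parts (E l).2
      have hpsi : psiNorm α (z l) = (((E l : Finset (Fin (n-1))).card : ℝ)) ^ α := by
        rw [hz]
        exact psiNorm_indicator hm α _ hIne
      rw [hpsi, hi0val (E l)]
      have hb := pjac_norm_le hd (u (i0 (E l))) x (hsphere _) (hdiff _)
      have hcard : (0:ℝ) ≤ (((E l : Finset (Fin (n-1))).card : ℝ)) ^ α :=
        Real.rpow_nonneg (Nat.cast_nonneg _) α
      calc (((E l : Finset (Fin (n-1))).card : ℝ)) ^ α * Real.sqrt (∑ k, τ l k ^ 2)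
          ≤ (((E l : Finset (Fin (n-1))).card : ℝ)) ^ α * (C * frobD (u (i0 (E l))) x ^ (d-1)) := by
            apply mul_le_mul_of_nonneg_left _ hcard
            rw [hτ]
            exact hb
        _ = C * ((((E l : Finset (Fin (n-1))).card : ℝ)) ^ α * frobD (u (i0 (E l))) x ^ (d-1)) := by
            ring
    exact le_trans (csInf_le hSbdd hmemS) hle
  have hTne : T.Nonempty := by
    refine ⟨_, ⊥, ?_, rfl⟩
    intro I hI i hi l hl
    rw [Finpartition.parts_bot] at hI
    obtain ⟨a, -, ha⟩ := Finset.mem_map.mp hI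
    simp only [Function.Embedding.coeFn_mk] at ha
    rw [← ha] at hi hl
    rw [Finset.mem_singleton.mp hi, Finset.mem_singleton.mp hl]
  have h2 : sInf S / C ≤ sInf T :=
    le_csInf hTne fun t ht => (div_le_iff₀ hCpos).mpr (by rw [mul_comm]; exact hkey t ht)
  have h3 : sInf S ≤ sInf T * C := (div_le_iff₀ hCpos).mp h2
  show sInf S ≤ eDens α u x
  have : eDens α u x = C * sInf T := rfl
  rw [this, mul_comm]
  exact h3

end
end
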